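/- arXiv:1305.5032 — 9 statements merged into one kernel-verified Lean document; each statement's English description precedes it below -/
import Mathlib

section
/- For compositions I = (i_1,...,i_k) and J = (j_1,...,j_k) of the same integer n and length k, the number of set partitions π of {1,...,n} into k blocks such that, when the blocks are ordered by increasing maximal elements, the block sizes are (i_1,...,i_k) and the maximal elements are (j_1, j_1+j_2, ..., j_1+...+j_k), equals the product over s from 1 to k of binomial(j_1+...+j_s - (i_1+...+i_{s-1}) - 1, i_s - 1). -/
/-!
The block with the smallest maximum `M` and size `i` consists of `M` together with any `i - 1`
of the elements below `M`. Removing it leaves a partition of the same kind of the remaining set,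
in which each later maximum has exactly `i` fewer elements below it; induction on the number of
blocks gives the product.
-/

open Finset

namespace Finpartition

variable {α : Type*} [LinearOrder α] {S B : Finset α}

def HasBlockMaxCard (P : Finpartition S) (m : ℕ → α) (L : List ℕ) : Prop :=
  #P.parts = L.length ∧
    ∀ s < L.length, ∃ B ∈ P.parts, m s ∈ B ∧ (∀ x ∈ B, x ≤ m s) ∧ #B = L.getD s 0

lemma sup_erase_parts (P : Finpartition S) (hB : B ∈ P.parts) :
    (P.parts.erase B).sup id = S \ B := by
  ext x
  simp only [mem_sup, mem_erase, mem_sdiff, id]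
  constructor
  · rintro ⟨C, ⟨hCB, hC⟩, hx⟩
    exact ⟨P.le hC hx, fun hxB => hCB (P.eq_of_mem_parts hC hB hx hxB)⟩
  · rintro ⟨hxS, hxB⟩
    obtain ⟨C, hC, hx⟩ := P.exists_mem hxS
    exact ⟨C, ⟨fun h => hxB (h ▸ hx), hC⟩, hx⟩

def eraseBlock (P : Finpartition S) (hB : B ∈ P.parts) : Finpartition (S \ B) :=
  P.ofSubset (erase_subset B P.parts) (P.sup_erase_parts hB)

def extendBlock (P : Finpartition (S \ B)) (hBS : B ⊆ S) (hB : B.Nonempty) : Finpartition S :=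
  P.extend hB.ne_empty sdiff_disjoint (by rw [sup_eq_union, sdiff_union_of_subset hBS])

lemma notMem_parts_of_sdiff (P : Finpartition (S \ B)) (hB : B.Nonempty) : B ∉ P.parts :=
  fun h => by
    obtain ⟨x, hx⟩ := hB
    exact (mem_sdiff.1 (P.le h hx)).2 hx

lemma mem_parts_of_part_eq {P : Finpartition S} {a : α} (ha : a ∈ S) (h : P.part a = B) :
    B ∈ P.parts :=
  h ▸ P.part_mem.2 ha

def blocksWithMax (S : Finset α) (m : α) (l : ℕ) : Finset (Finset α) :=
  {B ∈ S.powerset | m ∈ B ∧ (∀ x ∈ B, x ≤ m) ∧ #B = l}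

@[simp]
lemma mem_blocksWithMax {m : α} {l : ℕ} :
    B ∈ blocksWithMax S m l ↔ B ⊆ S ∧ m ∈ B ∧ (∀ x ∈ B, x ≤ m) ∧ #B = l := by
  simp [blocksWithMax]

lemma card_blocksWithMax {m : α} {l : ℕ} (hm : m ∈ S) (hl : 0 < l) :
    #(blocksWithMax S m l) = (#{x ∈ S | x < m}).choose (l - 1) := by
  rw [← card_powersetCard]
  refine card_nbij' (·.erase m) (insert m) ?_ ?_ ?_ ?_
  · intro B hB
    obtain ⟨hBS, hmB, hBm, hBcard⟩ := mem_blocksWithMax.1 hB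
    rw [mem_coe, mem_powersetCard, card_erase_of_mem hmB, hBcard]
    refine ⟨fun x hx => ?_, rfl⟩
    obtain ⟨hxm, hxB⟩ := mem_erase.1 hx
    exact mem_filter.2 ⟨hBS hxB, (hBm x hxB).lt_of_ne hxm⟩
  · intro T hT
    obtain ⟨hTS, hTcard⟩ := mem_powersetCard.1 hT
    have hmT : m ∉ T := fun h => (mem_filter.1 (hTS h)).2.false
    rw [mem_coe, mem_blocksWithMax, card_insert_of_notMem hmT, hTcard]
    refine ⟨insert_subset hm (hTS.trans (filter_subset _ _)), mem_insert_self m T, ?_, by omega⟩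
    simpa using fun x hx => (mem_filter.1 (hTS hx)).2.le
  · intro B hB
    exact insert_erase (mem_filter.1 hB).2.1
  · intro T hT
    exact erase_insert fun h => (mem_filter.1 ((mem_powersetCard.1 hT).1 h)).2.false

variable {m : ℕ → α} {l : ℕ} {L : List ℕ}

lemma HasBlockMaxCard.eraseBlock {P : Finpartition S} (hP : P.HasBlockMaxCard m (l :: L))
    (hB : B ∈ P.parts) (hBm : ∀ x ∈ B, x ≤ m 0) (hm : ∀ s < L.length, m 0 < m (s + 1)) :
    (P.eraseBlock hB).HasBlockMaxCard (fun s => m (s + 1)) L := by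
  refine ⟨?_, fun s hs => ?_⟩
  · simp [Finpartition.eraseBlock, card_erase_of_mem hB, hP.1]
  · obtain ⟨C, hC, hmC, hCm, hCcard⟩ := hP.2 (s + 1) (by simpa using hs)
    have hCB : C ≠ B := fun h => (hm s hs).not_ge (hBm _ (h ▸ hmC))
    exact ⟨C, mem_erase.2 ⟨hCB, hC⟩, hmC, hCm, hCcard⟩

lemma HasBlockMaxCard.extendBlock {P : Finpartition (S \ B)}
    (hP : P.HasBlockMaxCard (fun s => m (s + 1)) L) (hB : B ∈ blocksWithMax S (m 0) l) :
    (P.extendBlock (mem_blocksWithMax.1 hB).1 ⟨m 0, (mem_blocksWithMax.1 hB).2.1⟩).HasBlockMaxCard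
      m (l :: L) := by
  obtain ⟨hBS, hmB, hBm, hBcard⟩ := mem_blocksWithMax.1 hB
  have hBP : B ∉ P.parts := P.notMem_parts_of_sdiff ⟨m 0, hmB⟩
  refine ⟨?_, fun s hs => ?_⟩
  · simp [Finpartition.extendBlock, card_insert_of_notMem hBP, hP.1]
  rcases s with _ | s
  · exact ⟨B, mem_insert_self _ _, hmB, hBm, hBcard⟩
  · obtain ⟨C, hC, hmC, hCm, hCcard⟩ := hP.2 s (by simpa using hs)
    exact ⟨C, mem_insert_of_mem hC, hmC, hCm, hCcard⟩

lemma HasBlockMaxCard.part_mem_blocksWithMax {P : Finpartition S}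
    (hP : P.HasBlockMaxCard m (l :: L)) : P.part (m 0) ∈ blocksWithMax S (m 0) l := by
  obtain ⟨B, hB, hmB, hBm, hBcard⟩ := hP.2 0 (Nat.succ_pos _)
  rw [P.part_eq_of_mem hB hmB, mem_blocksWithMax]
  exact ⟨P.le hB, hmB, hBm, hBcard⟩

def removeBlockEquiv (hB : B ∈ blocksWithMax S (m 0) l) (hm : ∀ s < L.length, m 0 < m (s + 1)) :
    {P : {P : Finpartition S // P.HasBlockMaxCard m (l :: L)} // P.1.part (m 0) = B} ≃
      {P : Finpartition (S \ B) // P.HasBlockMaxCard (fun s => m (s + 1)) L} :=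
  have hmS : m 0 ∈ S := (mem_blocksWithMax.1 hB).1 (mem_blocksWithMax.1 hB).2.1
  { toFun P :=
      have hBP := mem_parts_of_part_eq hmS P.2
      ⟨P.1.1.eraseBlock hBP, P.1.2.eraseBlock hBP (mem_blocksWithMax.1 hB).2.2.1 hm⟩
    invFun P := ⟨⟨_, P.2.extendBlock hB⟩,
      part_eq_of_mem _ (mem_insert_self _ _) (mem_blocksWithMax.1 hB).2.1⟩
    left_inv P := by
      ext1; ext1; ext1
      simp [Finpartition.extendBlock, Finpartition.eraseBlock,
        insert_erase (mem_parts_of_part_eq hmS P.2)]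
    right_inv P := by
      ext1; ext1
      simp [Finpartition.extendBlock, Finpartition.eraseBlock,
        P.1.notMem_parts_of_sdiff ⟨m 0, (mem_blocksWithMax.1 hB).2.1⟩] }

theorem card_hasBlockMaxCard (L : List ℕ) (S : Finset α) (m : ℕ → α)
    (hm : StrictMonoOn m (Set.Iio L.length)) (hmS : ∀ s < L.length, m s ∈ S)
    (hL : ∀ l ∈ L, 0 < l) (hsum : L.sum = #S) :
    Nat.card {P : Finpartition S // P.HasBlockMaxCard m L} =
      ∏ s ∈ range L.length, (#{x ∈ S | x < m s} - (L.take s).sum).choose (L.getD s 0 - 1) := by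
  induction L generalizing S m with
  | nil =>
    obtain rfl : S = ∅ := card_eq_zero.1 hsum.symm
    have : Subsingleton (Finpartition (∅ : Finset α)) :=
      inferInstanceAs (Subsingleton (Finpartition (⊥ : Finset α)))
    refine Nat.card_eq_one_iff_unique.2 ⟨inferInstance, ⟨⟨Finpartition.empty _, ?_⟩⟩⟩
    exact ⟨rfl, fun s hs => absurd hs (Nat.not_lt_zero s)⟩
  | cons l L ih =>
    have hm0 : ∀ s < L.length, m 0 < m (s + 1) := fun s hs =>
      hm (by simp) (by simp; omega) (by omega)
    have hmtail : StrictMonoOn (fun s => m (s + 1)) (Set.Iio L.length) := fun a ha b hb hab =>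
      hm (by simp at ha ⊢; omega) (by simp at hb ⊢; omega) (by omega)
    have hfiber : ∀ B ∈ blocksWithMax S (m 0) l,
        Nat.card {P : Finpartition (S \ B) // P.HasBlockMaxCard (fun s => m (s + 1)) L} =
          ∏ s ∈ range L.length,
            (#{x ∈ S | x < m (s + 1)} - l - (L.take s).sum).choose (L.getD s 0 - 1) := by
      intro B hB
      obtain ⟨hBS, hmB, hBm, hBcard⟩ := mem_blocksWithMax.1 hB
      have hmS' : ∀ s < L.length, m (s + 1) ∈ S \ B := fun s hs =>
        mem_sdiff.2 ⟨hmS (s + 1) (by simpa using hs), fun h => (hm0 s hs).not_ge (hBm _ h)⟩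
      rw [ih (S \ B) _ hmtail hmS' (fun l' hl' => hL l' (by simp [hl']))
        (by simp [card_sdiff_of_subset hBS, hBcard, ← hsum])]
      refine prod_congr rfl fun s hs => ?_
      have hBlt : B ⊆ {x ∈ S | x < m (s + 1)} := fun x hx =>
        mem_filter.2 ⟨hBS hx, (hBm x hx).trans_lt (hm0 s (mem_range.1 hs))⟩
      have : {x ∈ S \ B | x < m (s + 1)} = {x ∈ S | x < m (s + 1)} \ B := by
        ext; simp only [mem_filter, mem_sdiff]; tauto
      rw [this, card_sdiff_of_subset hBlt, hBcard]
    calc Nat.card {P : Finpartition S // P.HasBlockMaxCard m (l :: L)}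
        = Nat.card (Σ B : blocksWithMax S (m 0) l,
            {P : {P : Finpartition S // P.HasBlockMaxCard m (l :: L)} // P.1.part (m 0) = B}) :=
          Nat.card_congr (Equiv.sigmaSubtypeFiberEquiv _ _ fun P => P.2.part_mem_blocksWithMax).symm
      _ = ∑ B : blocksWithMax S (m 0) l,
            Nat.card {P : Finpartition (S \ B) // P.HasBlockMaxCard (fun s => m (s + 1)) L} := by
          rw [Nat.card_sigma]
          exact sum_congr rfl fun B _ => Nat.card_congr (removeBlockEquiv B.2 hm0)
      _ = #(blocksWithMax S (m 0) l) * ∏ s ∈ range L.length,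
            (#{x ∈ S | x < m (s + 1)} - l - (L.take s).sum).choose (L.getD s 0 - 1) := by
          rw [sum_congr rfl fun B _ => hfiber B.1 B.2, sum_const, card_univ, Fintype.card_coe,
            smul_eq_mul]
      _ = _ := by
          rw [card_blocksWithMax (hmS 0 (by simp)) (hL l (by simp)), List.length_cons,
            prod_range_succ', mul_comm]
          simp [Nat.sub_sub]

end Finpartition

/-- counting set partitions of {1,...,n} into k blocks with
block sizes I (ordered by increasing maxima) and block maxima the partial
sums of J. -/
theorem stmt0 (n k : ℕ) (I J : Composition n)
    (hI : I.length = k) (hJ : J.length = k) :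
    Nat.card {P : Finpartition (Finset.Icc 1 n) //
      P.parts.card = k ∧
      ∀ s < k, ∃ B ∈ P.parts,
        ((J.blocks.take (s+1)).sum ∈ B ∧
         (∀ x ∈ B, x ≤ (J.blocks.take (s+1)).sum) ∧
         B.card = I.blocks.getD s 0)} =
    ∏ s ∈ Finset.range k,
      Nat.choose ((J.blocks.take (s+1)).sum - (I.blocks.take s).sum - 1)
        (I.blocks.getD s 0 - 1) := by
  subst hI
  have hm : StrictMonoOn (fun s => J.sizeUpTo (s + 1)) (Set.Iio I.length) :=
    fun a _ b hb hab => (J.monotone_sizeUpTo (show a + 1 ≤ b by omega)).trans_lt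
      (J.sizeUpTo_strict_mono (by rw [hJ]; exact hb))
  have hmS : ∀ s < I.length, J.sizeUpTo (s + 1) ∈ Icc 1 n := fun s hs =>
    mem_Icc.2 ⟨(Nat.zero_le _).trans_lt (J.sizeUpTo_strict_mono (hJ ▸ hs)), J.sizeUpTo_le _⟩
  have hfilter (v : ℕ) (hv : v ≤ n) : #{x ∈ Icc 1 n | x < v} = v - 1 := by
    rw [show {x ∈ Icc 1 n | x < v} = Ico 1 v by ext; simp; omega, Nat.card_Ico]
  refine (Finpartition.card_hasBlockMaxCard I.blocks (Icc 1 n) _ hm hmS (fun _ => I.blocks_pos)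
    (by simp [I.blocks_sum])).trans (prod_congr rfl fun s _ => ?_)
  rw [hfilter _ (J.sizeUpTo_le _), Nat.sub_right_comm]
  rfl
end

section
/- For any composition J = (j_1,...,j_k) of n of length k, the polynomial identity holds: the sum over all compositions I = (i_1,...,i_k) of n of length k of c_{IJ} · x_1^{i_1-1} x_2^{i_2-1} ··· x_k^{i_k-1} equals the product over s from 1 to k of (x_s + x_{s+1} + ... + x_k)^{j_s - 1}, where c_{IJ} = ∏_{s=1}^{k} binomial(j_1+...+j_s - (i_1+...+i_{s-1}) - 1, i_s - 1). -/
/-!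
Write `a_s = i_s - 1` and `b_s = j_s - 1`. The identity then says that the coefficient of
`v^a` in `∏_s (v_s + ⋯ + v_k)^{b_s}` is `∏_s choose(b_1 + ⋯ + b_s - a_1 - ⋯ - a_{s-1}, a_s)`.
This is proved by induction on `k` for the more general product
`(v_1 + ⋯ + v_k)^c · ∏_s (v_s + ⋯ + v_k)^{b_s}`: its first two factors are both powers of
`v_1 + T` with `T = v_2 + ⋯ + v_k`, and expanding `(v_1 + T)^{c + b_1}` binomially leaves, next to
`choose(c + b_1, a_1) v_1^{a_1}`, the power `T^{c + b_1 - a_1}`, which is the new `c` for the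
remaining `k - 1` variables.
-/

open Finset Finset.Nat MvPolynomial

theorem Finset.Nat.sum_antidiagonalTuple_succ {M : Type*} [AddCommMonoid M] (k m : ℕ)
    (f : (Fin (k + 1) → ℕ) → M) :
    ∑ a ∈ antidiagonalTuple (k + 1) m, f a =
      ∑ p ∈ antidiagonal m, ∑ a ∈ antidiagonalTuple k p.2, f (Fin.cons p.1 a) := by
  change (Multiset.map f (List.Nat.antidiagonalTuple (k + 1) m : Multiset (Fin (k + 1) → ℕ))).sum =
    (Multiset.map _ (List.Nat.antidiagonal m : Multiset (ℕ × ℕ))).sum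
  simp only [Multiset.map_coe, Multiset.sum_coe, List.Nat.antidiagonalTuple, List.flatMap_def,
    List.map_flatten, List.sum_flatten, List.map_map]
  congr 2 with p
  change _ = (Multiset.map _ (List.Nat.antidiagonalTuple k p.2 : Multiset (Fin k → ℕ))).sum
  simp [List.map_map, Function.comp_def]

theorem Fin.sum_filter_succ_le_cons {M : Type*} [AddCommMonoid M] {k : ℕ} (x : M)
    (v : Fin k → M) (s : Fin k) :
    ∑ t ∈ univ.filter (fun t => s.succ ≤ t), (Fin.cons x v : Fin (k + 1) → M) t =
      ∑ t ∈ univ.filter (fun t => s ≤ t), v t := by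
  simp [Finset.sum_filter, Fin.sum_univ_succ]

theorem List.sum_map_sub_one_add_length {L : List ℕ} (hL : ∀ x ∈ L, 0 < x) :
    (L.map (· - 1)).sum + L.length = L.sum := by
  induction L with
  | nil => rfl
  | cons x L ih =>
    simp only [List.forall_mem_cons] at hL
    simp only [List.map_cons, List.sum_cons, List.length_cons]
    have := ih hL.2
    omega

-- `c_{IJ}` for `a = I - 1` and `b = J - 1`, with `c` added to every partial sum of `b`.
def chooseProd {k : ℕ} (c : ℕ) (b a : Fin k → ℕ) : ℕ :=
  ∏ s : Fin k, (c + ((List.ofFn b).take (s + 1)).sum - ((List.ofFn a).take s).sum).choose (a s)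

theorem chooseProd_cons {k : ℕ} (c b₀ a₀ : ℕ) (b a : Fin k → ℕ) :
    chooseProd c (Fin.cons b₀ b) (Fin.cons a₀ a) =
      (c + b₀).choose a₀ * chooseProd (c + b₀ - a₀) b a := by
  rcases le_or_gt a₀ (c + b₀) with hle | hlt
  · have hcarry : ∀ B A : ℕ, c + (b₀ + B) - (a₀ + A) = c + b₀ - a₀ + B - A :=
      fun _ _ => by omega
    simp only [chooseProd, Fin.prod_univ_succ, List.ofFn_succ, Fin.cons_zero, Fin.cons_succ,
      Fin.val_zero, Fin.val_succ, List.take_succ_cons, List.take_zero, List.sum_cons, List.sum_nil,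
      add_zero, Nat.sub_zero, hcarry]
  · simp [chooseProd, Fin.prod_univ_succ, Nat.choose_eq_zero_of_lt hlt]

theorem sum_antidiagonalTuple_chooseProd_mul_prod_pow {R : Type*} [CommSemiring R] (k c : ℕ)
    (b : Fin k → ℕ) (v : Fin k → R) :
    ∑ a ∈ antidiagonalTuple k (c + ∑ s, b s), (chooseProd c b a : R) * ∏ s, v s ^ a s =
      (∑ s, v s) ^ c * ∏ s, (∑ t ∈ univ.filter (fun t => s ≤ t), v t) ^ b s := by
  induction k generalizing c with
  | zero => cases c <;> simp [chooseProd]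
  | succ k ih =>
    obtain ⟨b₀, b, rfl⟩ : ∃ b₀ b', b = Fin.cons b₀ b' := ⟨_, _, (Fin.cons_self_tail b).symm⟩
    obtain ⟨v₀, v, rfl⟩ : ∃ v₀ v', v = Fin.cons v₀ v' := ⟨_, _, (Fin.cons_self_tail v).symm⟩
    set m := c + ∑ s, (Fin.cons b₀ b : Fin (k + 1) → ℕ) s
    set T := ∑ s, v s
    set P := ∏ s, (∑ t ∈ univ.filter (fun t => s ≤ t), v t) ^ b s
    have hterm : ∀ p ∈ antidiagonal m,
        ∑ a ∈ antidiagonalTuple k p.2,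
          (chooseProd c (Fin.cons b₀ b) (Fin.cons p.1 a) : R) *
            ∏ s, (Fin.cons v₀ v : Fin (k + 1) → R) s ^ (Fin.cons p.1 a : Fin (k + 1) → ℕ) s =
        (c + b₀).choose p.1 * v₀ ^ p.1 * (T ^ (c + b₀ - p.1) * P) := by
      intro p hp
      rcases le_or_gt p.1 (c + b₀) with hle | hlt
      · have hp₂ : p.2 = (c + b₀ - p.1) + ∑ s, b s := by
          simp only [m, HasAntidiagonal.mem_antidiagonal, Fin.sum_univ_succ, Fin.cons_zero,
            Fin.cons_succ] at hp
          omega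
        rw [hp₂, ← ih, mul_sum]
        refine sum_congr rfl fun a _ => ?_
        simp only [chooseProd_cons, Fin.prod_univ_succ, Fin.cons_zero, Fin.cons_succ, Nat.cast_mul]
        ring
      · simp [chooseProd_cons, Nat.choose_eq_zero_of_lt hlt]
    have hvanish : ∀ i ∈ range m.succ, i ∉ range (c + b₀ + 1) →
        ((c + b₀).choose i : R) * v₀ ^ i * (T ^ (c + b₀ - i) * P) = 0 := by
      intro i _ hi
      rw [Nat.choose_eq_zero_of_lt (by simpa using hi), Nat.cast_zero, zero_mul, zero_mul]
    rw [sum_antidiagonalTuple_succ, sum_congr rfl hterm, sum_antidiagonal_eq_sum_range_succ_mk,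
      ← sum_subset (range_subset_range.mpr (by simp [m, Fin.sum_univ_succ])) hvanish]
    simp only [Fin.sum_univ_succ, Fin.prod_univ_succ, Fin.sum_filter_succ_le_cons, Fin.cons_zero,
      Fin.cons_succ, Fin.zero_le, filter_true]
    rw [← mul_assoc, ← pow_add, add_pow, sum_mul]
    exact sum_congr rfl fun i _ => by ring

namespace Composition

variable {n k : ℕ}

theorem sum_take_map_sub_one_add (I : Composition n) {m : ℕ} (hm : m ≤ I.length) :
    ((I.blocks.map (· - 1)).take m).sum + m = (I.blocks.take m).sum := by
  have := List.sum_map_sub_one_add_length (L := I.blocks.take m)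
    fun _ hx => I.blocks_pos (List.mem_of_mem_take hx)
  rwa [List.length_take_of_le hm, List.map_take] at this

theorem ofFn_getD_sub_one {I : Composition n} (hI : I.length = k) :
    List.ofFn (fun s : Fin k => I.blocks.getD s 0 - 1) = I.blocks.map (· - 1) := by
  subst hI
  refine List.ext_getElem (by simp [length]) fun m h₁ _ => ?_
  simp

theorem sum_getD_sub_one {I : Composition n} (hI : I.length = k) :
    ∑ s : Fin k, (I.blocks.getD s 0 - 1) = n - k := by
  have := List.sum_map_sub_one_add_length fun _ => I.blocks_pos
  rw [I.blocks_sum] at this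
  rw [← List.sum_ofFn, ofFn_getD_sub_one hI]
  simp only [length] at hI
  omega

theorem eq_of_getD_sub_one_eq {I I' : Composition n} (hI : I.length = k) (hI' : I'.length = k)
    (h : (fun s : Fin k => I.blocks.getD s 0 - 1) = fun s : Fin k => I'.blocks.getD s 0 - 1) :
    I = I' := by
  have hmap := congrArg List.ofFn h
  rw [ofFn_getD_sub_one hI, ofFn_getD_sub_one hI'] at hmap
  ext1
  have hblocks : ∀ J : Composition n, (J.blocks.map (· - 1)).map (· + 1) = J.blocks := fun J => by
    rw [List.map_map]
    exact (List.map_congr_left fun x hx => Nat.sub_add_cancel (J.blocks_pos hx)).trans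
      (List.map_id _)
  rw [← hblocks I, hmap, hblocks]

theorem sum_filter_length_eq_sum_antidiagonalTuple {M : Type*} [AddCommMonoid M] (hk : k ≤ n)
    (f : (Fin k → ℕ) → M) :
    ∑ I ∈ univ.filter (fun I : Composition n => I.length = k),
      f (fun s => I.blocks.getD s 0 - 1) = ∑ a ∈ antidiagonalTuple k (n - k), f a := by
  refine sum_nbij (fun I s => I.blocks.getD s 0 - 1) ?_ ?_ ?_ fun _ _ => rfl
  · exact fun I hI => mem_antidiagonalTuple.mpr (sum_getD_sub_one (by simpa using hI))
  · exact fun I hI I' hI' => eq_of_getD_sub_one_eq (by simpa using hI) (by simpa using hI')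
  · intro a ha
    rw [mem_coe, mem_antidiagonalTuple] at ha
    refine ⟨⟨List.ofFn (a · + 1), by simp, ?_⟩, ?_, ?_⟩
    · simp only [List.sum_ofFn, sum_add_distrib, ha, sum_const, card_univ, Fintype.card_fin,
        smul_eq_mul, mul_one]
      omega
    · simp [length]
    · funext s
      simp

end Composition

/-- the generating polynomial of the column `J` of the matrix
`(c_{IJ})` is `∏_s (x_s + ⋯ + x_k)^{j_s-1}`. -/
theorem stmt1 (n k : ℕ) (J : Composition n) (hJ : J.length = k) :
    ∑ I ∈ Finset.univ.filter (fun I : Composition n => I.length = k),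
      ((∏ s ∈ Finset.range k,
        Nat.choose ((J.blocks.take (s+1)).sum - (I.blocks.take s).sum - 1)
          (I.blocks.getD s 0 - 1) : ℕ) : MvPolynomial (Fin k) ℚ) *
        ∏ s : Fin k, (X s) ^ (I.blocks.getD s.val 0 - 1)
    = ∏ s : Fin k,
        (∑ t ∈ Finset.univ.filter (fun t : Fin k => s ≤ t), X t)
          ^ (J.blocks.getD s.val 0 - 1) := by
  have key := sum_antidiagonalTuple_chooseProd_mul_prod_pow k 0 (fun s => J.blocks.getD s 0 - 1)
    (X : Fin k → MvPolynomial (Fin k) ℚ)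
  rw [zero_add, Composition.sum_getD_sub_one hJ, pow_zero, one_mul,
    ← Composition.sum_filter_length_eq_sum_antidiagonalTuple (hJ ▸ J.length_le)] at key
  rw [← key]
  refine sum_congr rfl fun I hI => ?_
  have hI : I.length = k := by simpa using hI
  rw [chooseProd, ← Fin.prod_univ_eq_prod_range, Composition.ofFn_getD_sub_one hI,
    Composition.ofFn_getD_sub_one hJ]
  refine congrArg (fun N : ℕ => (N : MvPolynomial (Fin k) ℚ) * _) (prod_congr rfl fun s _ => ?_)
  have hJs := J.sum_take_map_sub_one_add (m := s + 1) (by omega)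
  have hIs := I.sum_take_map_sub_one_add (m := s) (by omega)
  congr 1
  omega
end

section
/- The column sums of the matrix (c_{IJ}) satisfy: for any composition I = (i_1,...,i_k) of n of length k, the sum over all compositions J = (j_1,...,j_k) of n of length k of ∏_{s=1}^{k} binomial(j_1+...+j_s - (i_1+...+i_{s-1}) - 1, i_s - 1) equals ∏_{s=2}^{k} binomial(i_1+...+i_s - 1, i_1+...+i_{s-1}). -/
/-!
Peel off the last block of `J`: if `J` is a composition of `m` followed by the block `n - m`,
the summand factors as the summand for the first `k - 1` blocks times `C(n - B' - 1, b_k - 1)`,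
where `b_1, …, b_k` are the blocks of `I` and `B' = b_1 + ⋯ + b_{k-1}`. This suggests decoupling
`n` from `I`: for any `n ≥ 1` the sum equals
`∏_{s=2}^{k} C(b_1 + ⋯ + b_s - 1, b_1 + ⋯ + b_{s-1}) * C(n - 1, B - 1)` with `B = B' + b_k`.
In the inductive step the sum over `m` of `C(m - 1, B' - 1)` is the hockey-stick sum
`C(n - 1, B')`, and trinomial revision
`C(n - 1, B') C(n - 1 - B', b_k - 1) = C(B - 1, B') C(n - 1, B - 1)` closes the induction.
At `n = B` the last factor is `1`.
-/

open Finset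

theorem List.sum_take_eq_sum_range_getD {M : Type*} [AddCommMonoid M] (L : List M) (s : ℕ) :
    (L.take s).sum = ∑ r ∈ Finset.range s, L.getD r 0 := by
  induction s with
  | zero => simp
  | succ s ih =>
    rw [List.take_add_one, List.sum_append, ih, Finset.sum_range_succ, List.getD_eq_getElem?_getD]
    cases L[s]? <;> simp

theorem Nat.sum_range_choose_eq_choose_succ (N a : ℕ) :
    ∑ j ∈ range N, j.choose a = N.choose (a + 1) := by
  induction N with
  | zero => simp
  | succ N ih => rw [sum_range_succ, ih, Nat.choose_succ_succ', add_comm]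

def compositionBlocks : ℕ → ℕ → Finset (List ℕ)
  | n, 0 => if n = 0 then {[]} else ∅
  | n, k + 1 => (range n).biUnion fun m => (compositionBlocks m k).image (· ++ [n - m])

theorem mem_compositionBlocks {n k : ℕ} {L : List ℕ} :
    L ∈ compositionBlocks n k ↔ L.length = k ∧ L.sum = n ∧ ∀ x ∈ L, 0 < x := by
  induction k generalizing n L with
  | zero =>
    simp only [compositionBlocks]
    split_ifs with h <;> cases L <;> simp_all [eq_comm]
  | succ k ih =>
    rcases L.eq_nil_or_concat with rfl | ⟨L, a, rfl⟩
    · simp [compositionBlocks]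
    · simp only [compositionBlocks, mem_biUnion, mem_range, mem_image, ih, List.concat_eq_append]
      constructor
      · rintro ⟨m, hm, L, ⟨hlen, hsum, hpos⟩, hL⟩
        obtain ⟨rfl, rfl⟩ := List.append_singleton_inj.1 hL
        exact ⟨by simpa using hlen, by simp; omega,
          by simpa using fun x hx => hx.elim (hpos x) fun _ => by omega⟩
      · rintro ⟨hlen, hsum, hpos⟩
        simp only [List.length_append, List.length_singleton, add_left_inj, List.sum_append,
          List.sum_singleton, List.mem_append, List.mem_singleton] at hlen hsum hpos
        have ha := hpos a (Or.inr rfl)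
        exact ⟨L.sum, by omega, L, ⟨hlen, rfl, fun x hx => hpos x (Or.inl hx)⟩, by simp; omega⟩

theorem compositionBlocks_zero_of_pos {k : ℕ} (hk : 0 < k) : compositionBlocks 0 k = ∅ := by
  obtain ⟨k, rfl⟩ := Nat.exists_eq_succ_of_ne_zero hk.ne'
  rfl

theorem sum_compositionBlocks_succ {M : Type*} [AddCommMonoid M] (n k : ℕ) (f : List ℕ → M) :
    ∑ L ∈ compositionBlocks n (k + 1), f L =
      ∑ m ∈ range n, ∑ L ∈ compositionBlocks m k, f (L ++ [n - m]) := by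
  rw [compositionBlocks, sum_biUnion]
  · exact sum_congr rfl fun m _ => sum_image fun _ _ _ _ h => List.append_left_injective _ h
  · intro m hm m' hm' hne
    simp only [Function.onFun, disjoint_left, mem_image, not_exists, not_and]
    rintro _ ⟨L, -, rfl⟩ L' - h
    have hlast : n - m' = n - m := by simpa using congrArg List.getLast? h
    simp only [coe_range, Set.mem_Iio] at hm hm'
    omega

theorem sum_compositions_eq_sum_compositionBlocks {M : Type*} [AddCommMonoid M] (n k : ℕ)
    (f : List ℕ → M) :
    ∑ J ∈ univ.filter (fun J : Composition n => J.length = k), f J.blocks =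
      ∑ L ∈ compositionBlocks n k, f L := by
  refine sum_bij (fun J _ => J.blocks) (fun J hJ => ?_) (fun J _ J' _ h => Composition.ext h)
    (fun L hL => ?_) (fun _ _ => rfl)
  · simp only [mem_filter, mem_univ, true_and] at hJ
    exact mem_compositionBlocks.2 ⟨hJ, J.blocks_sum, fun x hx => J.blocks_pos hx⟩
  · obtain ⟨hlen, hsum, hpos⟩ := mem_compositionBlocks.1 hL
    exact ⟨⟨L, hpos _, hsum⟩, by simpa using hlen, rfl⟩

theorem sum_compositionBlocks_prod_choose (b : ℕ → ℕ) {k : ℕ} (hk : 0 < k)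
    (hb : ∀ s < k, 0 < b s) {n : ℕ} (hn : 0 < n) :
    ∑ L ∈ compositionBlocks n k, ∏ s ∈ range k,
        ((L.take (s + 1)).sum - ∑ r ∈ range s, b r - 1).choose (b s - 1) =
      (∏ s ∈ Ico 1 k, (∑ r ∈ range (s + 1), b r - 1).choose (∑ r ∈ range s, b r)) *
        (n - 1).choose (∑ r ∈ range k, b r - 1) := by
  induction k, hk using Nat.le_induction generalizing n with
  | base =>
    rw [sum_compositionBlocks_succ, sum_eq_single_of_mem 0 (by simpa using hn)
      fun m _ hm => by simp [compositionBlocks, hm]]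
    simp [compositionBlocks]
  | succ k hk ih =>
    obtain ⟨n, rfl⟩ : ∃ n', n = n' + 1 := ⟨n - 1, by omega⟩
    set B := ∑ r ∈ range k, b r with hB
    have hB_pos : 0 < B := (hb 0 (by omega)).trans_le (single_le_sum (by simp) (by simp; omega))
    have last_factor : ∀ m ∈ range (n + 1), ∀ L ∈ compositionBlocks m k,
        ∏ s ∈ range (k + 1),
          (((L ++ [n + 1 - m]).take (s + 1)).sum - ∑ r ∈ range s, b r - 1).choose (b s - 1) =
        (∏ s ∈ range k, ((L.take (s + 1)).sum - ∑ r ∈ range s, b r - 1).choose (b s - 1)) *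
          (n - B).choose (b k - 1) := by
      intro m hm L hL
      obtain ⟨hlen, hsum, -⟩ := mem_compositionBlocks.1 hL
      rw [prod_range_succ, List.take_of_length_le (by simp [hlen]), List.sum_append, hsum]
      congr 1
      · refine prod_congr rfl fun s hs => ?_
        rw [List.take_append_of_le_length (by rw [hlen]; exact mem_range.1 hs)]
      · rw [List.sum_singleton, ← hB, Nat.add_sub_cancel' (mem_range.1 hm).le,
          Nat.sub_right_comm, Nat.add_sub_cancel]
    calc _ = ∑ m ∈ range (n + 1),
          (∑ L ∈ compositionBlocks m k, ∏ s ∈ range k,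
            ((L.take (s + 1)).sum - ∑ r ∈ range s, b r - 1).choose (b s - 1)) *
            (n - B).choose (b k - 1) := by
          rw [sum_compositionBlocks_succ]
          exact sum_congr rfl fun m hm => by rw [sum_mul]; exact sum_congr rfl (last_factor m hm)
      _ = ∑ m ∈ range n,
          (∏ s ∈ Ico 1 k, (∑ r ∈ range (s + 1), b r - 1).choose (∑ r ∈ range s, b r)) *
            m.choose (B - 1) * (n - B).choose (b k - 1) := by
          rw [sum_range_succ', compositionBlocks_zero_of_pos hk, sum_empty, zero_mul, add_zero]
          exact sum_congr rfl fun m _ => by rw [ih (fun s hs => hb s (by omega)) (by omega)]; rfl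
      _ = _ := by
          have hBk : B + b k - 1 = B + (b k - 1) := by have := hb k (by omega); omega
          have trinomial := Nat.choose_mul (n := n) (k := B + (b k - 1)) (s := B) (by omega)
          rw [Nat.add_sub_cancel_left] at trinomial
          rw [← sum_mul, ← mul_sum, Nat.sum_range_choose_eq_choose_succ, Nat.sub_add_cancel hB_pos,
            prod_Ico_succ_top hk, sum_range_succ, ← hB, Nat.add_sub_cancel, hBk, mul_assoc,
            ← trinomial]
          ring

/-- column sums of the matrices `(c_{IJ})`. -/
theorem stmt2 (n k : ℕ) (I : Composition n) (hI : I.length = k) :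
    ∑ J ∈ Finset.univ.filter (fun J : Composition n => J.length = k),
      ∏ s ∈ Finset.range k,
        Nat.choose ((J.blocks.take (s+1)).sum - (I.blocks.take s).sum - 1)
          (I.blocks.getD s 0 - 1)
    = ∏ s ∈ Finset.Ico 1 k,
        Nat.choose ((I.blocks.take (s+1)).sum - 1) ((I.blocks.take s).sum) := by
  simp only [List.sum_take_eq_sum_range_getD I.blocks]
  rw [sum_compositions_eq_sum_compositionBlocks n k fun L => ∏ s ∈ range k,
    ((L.take (s + 1)).sum - ∑ r ∈ range s, I.blocks.getD r 0 - 1).choose (I.blocks.getD s 0 - 1)]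
  rcases Nat.eq_zero_or_pos k with rfl | hk
  · obtain rfl : n = 0 := by simpa [hI] using I.length_pos_iff.not
    simp [compositionBlocks]
  · have hb : ∀ s < k, 0 < I.blocks.getD s 0 := fun s hs => by
      rw [List.getD_eq_getElem _ _ (by rwa [← Composition.length, hI])]
      exact I.blocks_pos (List.getElem_mem _)
    rw [sum_compositionBlocks_prod_choose _ hk hb (hk.trans_le (hI ▸ I.length_le)),
      ← List.sum_take_eq_sum_range_getD, ← hI, List.take_length, I.blocks_sum, Nat.choose_self,
      mul_one]
end

section
/- For any positive integers n and k with k ≤ n, the total sum over all pairs (I, J) of compositions of n of length k of the coefficients c_{IJ} = ∏_{s=1}^{k} binomial(j_1+...+j_s - (i_1+...+i_{s-1}) - 1, i_s - 1) equals the Stirling number of the second kind S(n,k). -/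
/-!
Order the blocks of a set partition of `{1, …, n}` by their maxima `M₁ < ⋯ < M_k` and record
their sizes `i₁, …, i_k`: the sizes form a composition `I` of `n`, and the maxima are the partial
sums of a composition `J` of `n`. Conversely, given `I` and `J`, the `s`-th block consists of `M_s`
together with `i_s - 1` elements below `M_s` not used by the earlier blocks. All earlier blocks lie
below `M_s`, so there are `M_s - 1 - (i₁ + ⋯ + i_{s-1})` candidates, and exactly `c_{IJ}`
partitions have data `(I, J)`.
-/

open Finset

namespace List

theorem partialSums_eq_zero_cons_tail (l : List ℕ) : l.partialSums = 0 :: l.partialSums.tail := by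
  cases l <;> simp [partialSums]

theorem pairwise_lt_partialSums_iff {l : List ℕ} :
    l.partialSums.Pairwise (· < ·) ↔ ∀ x ∈ l, 0 < x := by
  induction l with
  | nil => simp
  | cons a l ih =>
    rw [partialSums_cons, pairwise_cons, pairwise_map, forall_mem_cons, ← ih]
    simp only [Nat.add_lt_add_iff_left, mem_map, forall_exists_index, and_imp,
      forall_apply_eq_imp_iff₂]
    constructor
    · rintro ⟨h, hl⟩
      exact ⟨by simpa using h 0 (by rw [partialSums_eq_zero_cons_tail]; exact mem_cons_self), hl⟩
    · rintro ⟨ha, hl⟩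
      exact ⟨fun _ _ => by omega, hl⟩

theorem partialSums_injective : Function.Injective (partialSums : List ℕ → List ℕ) := by
  intro l l' h
  have hlen : l.length = l'.length := by simpa using congrArg length h
  refine eq_of_sum_take_eq hlen fun i hi => ?_
  simpa [hi, hlen ▸ hi] using congrArg (·[i]?) h

theorem le_sum_of_mem_partialSums {l : List ℕ} {x : ℕ} (h : x ∈ l.partialSums) : x ≤ l.sum := by
  obtain ⟨i, hi, rfl⟩ := mem_iff_getElem.1 h
  rw [getElem_partialSums]
  exact (take_sublist i l).sum_le_sum (fun _ _ => Nat.zero_le _)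

theorem sum_mem_partialSums (l : List ℕ) : l.sum ∈ l.partialSums := by
  rw [mem_iff_getElem]
  exact ⟨l.length, by simp, by simp⟩

theorem getD_tail_partialSums {l : List ℕ} {s : ℕ} (d : ℕ) (hs : s < l.length) :
    l.partialSums.tail.getD s d = (l.take (s + 1)).sum := by
  rw [getD_eq_getElem _ _ (by simpa using hs), getElem_tail, getElem_partialSums]

def adjDiffs : ℕ → List ℕ → List ℕ
  | _, [] => []
  | a, b :: l => (b - a) :: adjDiffs b l

theorem partialSums_adjDiffs {a : ℕ} {l : List ℕ} (h : (a :: l).Pairwise (· ≤ ·)) :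
    (adjDiffs a l).partialSums.map (a + ·) = a :: l := by
  induction l generalizing a with
  | nil => simp [adjDiffs]
  | cons b l ih =>
    have hab : a ≤ b := rel_of_pairwise_cons h mem_cons_self
    rw [adjDiffs, partialSums_cons, map_cons, map_map, ← ih (pairwise_cons.1 h).2]
    congr 2
    funext x
    simp only [Function.comp_apply]
    omega

theorem eq_of_toFinset_eq_of_pairwise_lt {β γ : Type*} [DecidableEq β] [Preorder γ]
    {f : β → γ} {l₁ l₂ : List β} (h₁ : l₁.Pairwise (f · < f ·)) (h₂ : l₂.Pairwise (f · < f ·))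
    (h : l₁.toFinset = l₂.toFinset) : l₁ = l₂ :=
  have nodup {l : List β} (hl : l.Pairwise (f · < f ·)) : l.Nodup :=
    hl.imp fun h => ne_of_apply_ne f h.ne
  (perm_of_nodup_nodup_toFinset_eq (nodup h₁) (nodup h₂) h).eq_of_pairwise
    (fun _ _ _ _ hab hba => (lt_asymm hab hba).elim) h₁ h₂

end List

theorem card_sup_toFinset {β : Type*} [DecidableEq β] {L : List (Finset β)}
    (h : L.Pairwise Disjoint) : #(L.toFinset.sup id) = (L.map card).sum := by
  induction L with
  | nil => simp
  | cons B L ih =>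
    rw [List.pairwise_cons] at h
    rw [List.toFinset_cons, sup_insert, id, sup_eq_union, card_union_of_disjoint
      (Finset.disjoint_sup_right.2 fun C hC => h.1 C (List.mem_toFinset.1 hC) :
        Disjoint B (L.toFinset.sup id)), ih h.2,
      List.map_cons, List.sum_cons]

namespace Composition

variable {n : ℕ}

theorem exists_partialSums_tail_eq {l : List ℕ}
    (hl : (0 :: l).Pairwise (· < ·)) (hle : ∀ x ∈ l, x ≤ n) (hn : n ∈ 0 :: l) :
    ∃ J : Composition n, J.blocks.partialSums.tail = l := by
  have hps : (l.adjDiffs 0).partialSums = 0 :: l := by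
    simpa using List.partialSums_adjDiffs (hl.imp le_of_lt)
  have hsum : (l.adjDiffs 0).sum = n := by
    have hmem := List.sum_mem_partialSums (l.adjDiffs 0)
    rw [hps] at hmem
    refine le_antisymm ?_ (List.le_sum_of_mem_partialSums (hps ▸ hn))
    rcases List.mem_cons.1 hmem with h | h
    · omega
    · exact hle _ h
  refine ⟨⟨l.adjDiffs 0, fun {x} hx => List.pairwise_lt_partialSums_iff.1 (hps ▸ hl) x hx, hsum⟩,
    ?_⟩
  simp [hps]

theorem pairwise_lt_zero_cons_partialSums_tail (J : Composition n) :
    (0 :: J.blocks.partialSums.tail).Pairwise (· < ·) := by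
  rw [← List.partialSums_eq_zero_cons_tail, List.pairwise_lt_partialSums_iff]
  exact fun _ => J.blocks_pos

theorem mem_Icc_of_mem_partialSums_tail {x : ℕ} {J : Composition n}
    (hx : x ∈ J.blocks.partialSums.tail) : x ∈ Icc 1 n :=
  mem_Icc.2 ⟨(List.pairwise_cons.1 J.pairwise_lt_zero_cons_partialSums_tail).1 x hx,
    J.blocks_sum ▸ List.le_sum_of_mem_partialSums (List.mem_of_mem_tail hx)⟩

theorem partialSums_tail_injective :
    Function.Injective fun J : Composition n => J.blocks.partialSums.tail := by
  intro J J' h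
  refine Composition.ext (List.partialSums_injective ?_)
  rw [List.partialSums_eq_zero_cons_tail, List.partialSums_eq_zero_cons_tail J'.blocks]
  exact congrArg _ h

end Composition

section MaxOrdered

variable {α : Type*} [LinearOrder α] [OrderBot α]

theorem Finset.sup_id_mem {B : Finset α} (h : B.Nonempty) : B.sup id ∈ B := by
  obtain ⟨x, hx, hsup⟩ := B.exists_mem_eq_sup h id
  exact hsup ▸ hx

def blockLists : Finset α → List ℕ → List α → Finset (List (Finset α))
  | _, [], [] => {[]}
  | A, i :: is, M :: Ms =>
    {B ∈ A.powersetCard i | B.sup id = M}.biUnion fun B => (blockLists (A \ B) is Ms).image (B :: ·)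
  | _, _, _ => ∅

theorem mem_blockLists {A : Finset α} {is : List ℕ} {Ms : List α} {L : List (Finset α)} :
    L ∈ blockLists A is Ms ↔
      L.map card = is ∧ L.map (·.sup id) = Ms ∧ L.Pairwise Disjoint ∧ ∀ B ∈ L, B ⊆ A := by
  induction is generalizing A Ms L with
  | nil => cases Ms <;> cases L <;> simp [blockLists]
  | cons i is ih =>
    cases Ms with
    | nil => cases L <;> simp [blockLists]
    | cons M Ms =>
      cases L with
      | nil => simp [blockLists]
      | cons B L =>
        simp only [blockLists, mem_biUnion, mem_filter, mem_powersetCard, mem_image, ih,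
          List.map_cons, List.cons.injEq, List.pairwise_cons, List.forall_mem_cons, subset_sdiff]
        constructor
        · rintro ⟨_, ⟨⟨hBA, rfl⟩, rfl⟩, _, ⟨rfl, rfl, hL, hLA⟩, rfl, rfl⟩
          exact ⟨⟨rfl, rfl⟩, ⟨rfl, rfl⟩, ⟨fun C hC => (hLA C hC).2.symm, hL⟩, hBA,
            fun C hC => (hLA C hC).1⟩
        · rintro ⟨⟨rfl, rfl⟩, ⟨rfl, rfl⟩, ⟨hB, hL⟩, hBA, hLA⟩
          exact ⟨B, ⟨⟨hBA, rfl⟩, rfl⟩, L, ⟨rfl, rfl, hL, fun C hC => ⟨hLA C hC, (hB C hC).symm⟩⟩,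
            rfl, rfl⟩

theorem card_filter_powersetCard_sup_eq {A : Finset α} {M : α} {i : ℕ} (hM : M ∈ A) (hi : 0 < i) :
    #{B ∈ A.powersetCard i | B.sup id = M} = (#{a ∈ A | a < M}).choose (i - 1) := by
  rw [← card_powersetCard]
  refine card_nbij' (·.erase M) (insert M) ?_ ?_ ?_ ?_
  · intro B hB
    simp only [mem_coe, mem_filter, mem_powersetCard] at hB ⊢
    obtain ⟨⟨hBA, hcard⟩, rfl⟩ := hB
    have hmem : B.sup id ∈ B := sup_id_mem (card_pos.1 (hcard ▸ hi))
    refine ⟨fun x hx => ?_, by rw [card_erase_of_mem hmem, hcard]⟩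
    obtain ⟨hne, hx⟩ := mem_erase.1 hx
    exact mem_filter.2 ⟨hBA hx, lt_of_le_of_ne (le_sup (f := id) hx) hne⟩
  · intro S hS
    simp only [mem_coe, mem_filter, mem_powersetCard, subset_iff] at hS ⊢
    have hMS : M ∉ S := fun h => lt_irrefl M (hS.1 h).2
    refine ⟨⟨fun x hx => ?_, by rw [card_insert_of_notMem hMS, hS.2]; omega⟩, ?_⟩
    · rcases mem_insert.1 hx with rfl | hx
      exacts [hM, (hS.1 hx).1]
    · rw [sup_insert, id, sup_eq_left]
      exact Finset.sup_le fun x hx => (hS.1 hx).2.le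
  · intro B hB
    simp only [mem_coe, mem_filter, mem_powersetCard] at hB
    obtain ⟨⟨-, hcard⟩, rfl⟩ := hB
    exact insert_erase (sup_id_mem (card_pos.1 (hcard ▸ hi)))
  · intro S hS
    simp only [mem_coe, mem_filter, mem_powersetCard, subset_iff] at hS
    exact erase_insert fun h => lt_irrefl M (hS.1 h).2

theorem card_blockLists_cons (A : Finset α) (i : ℕ) (is : List ℕ) (M : α) (Ms : List α) :
    #(blockLists A (i :: is) (M :: Ms)) =
      ∑ B ∈ A.powersetCard i with B.sup id = M, #(blockLists (A \ B) is Ms) := by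
  rw [blockLists, card_biUnion]
  · exact sum_congr rfl fun B _ => card_image_of_injective _ List.cons_injective
  · intro B₁ _ B₂ _ hne
    simp only [Function.onFun, disjoint_left, mem_image]
    rintro _ ⟨L₁, -, rfl⟩ ⟨L₂, -, h⟩
    exact hne (List.cons.inj h).1.symm

theorem card_blockLists {A : Finset α} {is : List ℕ} {Ms : List α}
    (hlen : is.length = Ms.length) (his : ∀ i ∈ is, 0 < i) (hMs : Ms.Pairwise (· < ·))
    (hMA : ∀ M ∈ Ms, M ∈ A) :
    #(blockLists A is Ms) = ∏ s ∈ range is.length,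
      (#{a ∈ A | a < Ms.getD s ⊥} - (is.take s).sum).choose (is.getD s 0 - 1) := by
  induction is generalizing A Ms with
  | nil => cases Ms <;> simp_all [blockLists]
  | cons i is ih =>
    cases Ms with
    | nil => simp at hlen
    | cons M Ms =>
      rw [List.pairwise_cons] at hMs
      set blocks := {B ∈ A.powersetCard i | B.sup id = M}
      have hsub : ∀ B ∈ blocks, ∀ M' ∈ Ms, B ⊆ {a ∈ A | a < M'} := by
        intro B hB M' hM' x hx
        simp only [blocks, mem_filter, mem_powersetCard] at hB
        exact mem_filter.2 ⟨hB.1.1 hx, (hB.2 ▸ le_sup (f := id) hx).trans_lt (hMs.1 M' hM')⟩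
      have hcard : ∀ B ∈ blocks, #(blockLists (A \ B) is Ms) =
          ∏ s ∈ range is.length,
            (#{a ∈ A | a < Ms.getD s ⊥} - i - (is.take s).sum).choose (is.getD s 0 - 1) := by
        intro B hB
        have hBi : #B = i := (mem_powersetCard.1 (mem_filter.1 hB).1).2
        rw [ih (by simpa using hlen) (fun j hj => his j (List.mem_cons_of_mem _ hj)) hMs.2
          (fun M' hM' => mem_sdiff.2 ⟨hMA M' (List.mem_cons_of_mem _ hM'),
            fun h => lt_irrefl M' (mem_filter.1 (hsub B hB M' hM' h)).2⟩)]
        refine prod_congr rfl fun s hs => ?_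
        have hsM : Ms.getD s ⊥ ∈ Ms := by
          rw [List.getD_eq_getElem _ _ (by simp at hs hlen; omega)]
          exact List.getElem_mem _
        have hfilter : {a ∈ A \ B | a < Ms.getD s ⊥} = {a ∈ A | a < Ms.getD s ⊥} \ B := by
          ext; simp only [mem_filter, mem_sdiff]; tauto
        rw [hfilter, card_sdiff_of_subset (hsub B hB _ hsM), hBi]
      rw [card_blockLists_cons, sum_congr rfl hcard, sum_const,
        card_filter_powersetCard_sup_eq (hMA M List.mem_cons_self) (his i List.mem_cons_self),
        smul_eq_mul, List.length_cons, prod_range_succ', mul_comm]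
      simp [Nat.sub_sub]

def IsMaxOrderedPartition (A : Finset α) (L : List (Finset α)) : Prop :=
  L.Pairwise (fun B C => Disjoint B C ∧ B.sup id < C.sup id) ∧ (∀ B ∈ L, B.Nonempty) ∧
    L.toFinset.sup id = A

namespace Finpartition

variable {A : Finset α}

noncomputable def sortedParts (P : Finpartition A) : List (Finset α) :=
  P.parts.toList.mergeSort fun B C => B.sup id ≤ C.sup id

theorem toFinset_sortedParts (P : Finpartition A) : P.sortedParts.toFinset = P.parts := by
  rw [sortedParts, List.toFinset_eq_of_perm _ _ (List.mergeSort_perm _ _), toList_toFinset]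

theorem length_sortedParts (P : Finpartition A) : P.sortedParts.length = #P.parts := by
  rw [sortedParts, List.length_mergeSort, length_toList]

theorem isMaxOrderedPartition_sortedParts (P : Finpartition A) :
    IsMaxOrderedPartition A P.sortedParts := by
  have hmem {B} : B ∈ P.sortedParts ↔ B ∈ P.parts := by
    rw [← List.mem_toFinset, toFinset_sortedParts]
  have hsorted := List.pairwise_mergeSort (le := fun B C : Finset α => B.sup id ≤ C.sup id)
    (fun _ _ _ h₁ h₂ => by simp only [decide_eq_true_eq] at *; exact h₁.trans h₂)
    (fun B C => by simpa using le_total (B.sup id) (C.sup id)) P.parts.toList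
  have hnodup : P.sortedParts.Nodup := (List.mergeSort_perm _ _).nodup_iff.2 (nodup_toList _)
  refine ⟨(hsorted.and hnodup).imp_of_mem fun {B C} hB hC ⟨hle, hne⟩ => ?_,
    fun B hB => P.nonempty_of_mem_parts (hmem.1 hB), by rw [toFinset_sortedParts, P.sup_parts]⟩
  have hdisj : Disjoint B C := P.disjoint (hmem.1 hB) (hmem.1 hC) hne
  refine ⟨hdisj, lt_of_le_of_ne (by simpa using hle) fun h => ?_⟩
  exact disjoint_left.1 hdisj (sup_id_mem (P.nonempty_of_mem_parts (hmem.1 hB)))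
    (h ▸ sup_id_mem (P.nonempty_of_mem_parts (hmem.1 hC)))

def ofMaxOrdered (L : List (Finset α)) (h : IsMaxOrderedPartition A L) : Finpartition A where
  parts := L.toFinset
  supIndep := supIndep_iff_pairwiseDisjoint.2 fun _ hB _ hC hne =>
    (List.pairwise_and_iff.1 h.1).1.forall (List.mem_toFinset.1 hB) (List.mem_toFinset.1 hC) hne
  sup_parts := h.2.2
  bot_notMem h0 := not_nonempty_empty (h.2.1 ∅ (List.mem_toFinset.1 h0))

noncomputable def equivMaxOrdered (A : Finset α) :
    Finpartition A ≃ {L // IsMaxOrderedPartition A L} where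
  toFun P := ⟨P.sortedParts, P.isMaxOrderedPartition_sortedParts⟩
  invFun L := ofMaxOrdered L.1 L.2
  left_inv P := Finpartition.ext P.toFinset_sortedParts
  right_inv L := Subtype.ext <| List.eq_of_toFinset_eq_of_pairwise_lt
    (List.pairwise_and_iff.1 (isMaxOrderedPartition_sortedParts _).1).2
    (List.pairwise_and_iff.1 L.2.1).2 (toFinset_sortedParts _)

theorem card_subtype_card_parts_eq (A : Finset α) (k : ℕ) :
    Nat.card {P : Finpartition A // #P.parts = k} =
      Nat.card {L // IsMaxOrderedPartition A L ∧ L.length = k} :=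
  Nat.card_congr <| ((equivMaxOrdered A).subtypeEquiv fun P => by
    simp [equivMaxOrdered, length_sortedParts]).trans (Equiv.subtypeSubtypeEquivSubtypeInter _ _)

end Finpartition

end MaxOrdered

theorem card_blockLists_Icc {n k : ℕ} {I J : Composition n} (hI : I.length = k)
    (hJ : J.length = k) :
    #(blockLists (Icc 1 n) I.blocks J.blocks.partialSums.tail) =
      ∏ s ∈ range k, ((J.blocks.take (s + 1)).sum - (I.blocks.take s).sum - 1).choose
        (I.blocks.getD s 0 - 1) := by
  rw [card_blockLists (by simp [hI, hJ]) (fun _ => I.blocks_pos)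
    (List.pairwise_cons.1 J.pairwise_lt_zero_cons_partialSums_tail).2
    (fun _ => Composition.mem_Icc_of_mem_partialSums_tail), I.blocks_length, hI]
  refine prod_congr rfl fun s hs => ?_
  rw [List.getD_tail_partialSums _ (by simpa [hJ] using hs)]
  have hle : (J.blocks.take (s + 1)).sum ≤ n := J.sizeUpTo_le (s + 1)
  have hfilter : {a ∈ Icc 1 n | a < (J.blocks.take (s + 1)).sum} =
      Ico 1 (J.blocks.take (s + 1)).sum := by
    ext; simp only [mem_filter, mem_Icc, mem_Ico]; omega
  rw [hfilter, Nat.card_Ico, Nat.sub_right_comm]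

theorem pairwiseDisjoint_blockLists {n : ℕ} (A : Finset ℕ)
    (s : Set (Composition n × Composition n)) :
    s.PairwiseDisjoint fun p => blockLists A p.1.blocks p.2.blocks.partialSums.tail := by
  intro p _ q _ hpq
  refine disjoint_left.2 fun L hp hq => hpq ?_
  obtain ⟨hcard, hsup, -⟩ := mem_blockLists.1 hp
  obtain ⟨hcard', hsup', -⟩ := mem_blockLists.1 hq
  exact Prod.ext (Composition.ext (hcard.symm.trans hcard'))
    (Composition.partialSums_tail_injective (hsup.symm.trans hsup'))

theorem isMaxOrderedPartition_of_mem_blockLists {n k : ℕ} {I J : Composition n}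
    {L : List (Finset ℕ)} (hI : I.length = k)
    (hL : L ∈ blockLists (Icc 1 n) I.blocks J.blocks.partialSums.tail) :
    IsMaxOrderedPartition (Icc 1 n) L ∧ L.length = k := by
  obtain ⟨hcard, hsup, hdisj, hsub⟩ := mem_blockLists.1 hL
  have hcover : L.toFinset.sup id = Icc 1 n := by
    refine eq_of_subset_of_card_le (Finset.sup_le fun B hB => hsub B (List.mem_toFinset.1 hB)) ?_
    rw [card_sup_toFinset hdisj, hcard, I.blocks_sum, Nat.card_Icc, Nat.add_sub_cancel]
  refine ⟨⟨hdisj.and (List.pairwise_map.1 (hsup ▸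
    (List.pairwise_cons.1 J.pairwise_lt_zero_cons_partialSums_tail).2)),
    fun B hB => card_pos.1 (I.blocks_pos (hcard ▸ List.mem_map_of_mem hB)), hcover⟩, ?_⟩
  simpa [hI] using congrArg List.length hcard

theorem IsMaxOrderedPartition.exists_mem_blockLists {n : ℕ} {L : List (Finset ℕ)}
    (hL : IsMaxOrderedPartition (Icc 1 n) L) :
    ∃ I J : Composition n, (I.length = L.length ∧ J.length = L.length) ∧
      L ∈ blockLists (Icc 1 n) I.blocks J.blocks.partialSums.tail := by
  obtain ⟨hpw, hne, hcover⟩ := hL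
  have hsub : ∀ B ∈ L, B ⊆ Icc 1 n := fun B hB =>
    hcover ▸ le_sup (f := id) (List.mem_toFinset.2 hB)
  have hmax : ∀ B ∈ L, B.sup id ∈ Icc 1 n := fun B hB => hsub B hB (sup_id_mem (hne B hB))
  have hl : (0 :: L.map (·.sup id)).Pairwise (· < ·) := by
    refine List.pairwise_cons.2 ⟨?_, List.pairwise_map.2 (List.pairwise_and_iff.1 hpw).2⟩
    exact List.forall_mem_map.2 fun B hB => (mem_Icc.1 (hmax B hB)).1
  have hle : ∀ x ∈ L.map (·.sup id), x ≤ n :=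
    List.forall_mem_map.2 fun B hB => (mem_Icc.1 (hmax B hB)).2
  have hn : n ∈ 0 :: L.map (·.sup id) := by
    rcases n.eq_zero_or_pos with rfl | hn
    · exact List.mem_cons_self
    obtain ⟨B, hB, hnB⟩ := mem_sup.1 (hcover ▸ mem_Icc.2 ⟨hn, le_rfl⟩ : n ∈ L.toFinset.sup id)
    have hB := List.mem_toFinset.1 hB
    refine List.mem_cons_of_mem _ (List.mem_map.2 ⟨B, hB, ?_⟩)
    exact le_antisymm (mem_Icc.1 (hmax B hB)).2 (le_sup (f := id) hnB)
  obtain ⟨J, hJ⟩ := Composition.exists_partialSums_tail_eq hl hle hn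
  let I : Composition n :=
    ⟨L.map card, fun hi => by obtain ⟨B, hB, rfl⟩ := List.mem_map.1 hi; exact card_pos.2 (hne B hB),
      by rw [← card_sup_toFinset (List.pairwise_and_iff.1 hpw).1, hcover, Nat.card_Icc,
        Nat.add_sub_cancel]⟩
  refine ⟨I, J, ⟨by simp [I, Composition.length], ?_⟩,
    mem_blockLists.2 ⟨rfl, hJ.symm, (List.pairwise_and_iff.1 hpw).1, hsub⟩⟩
  simpa [Composition.length] using congrArg List.length hJ

theorem exists_mem_blockLists_iff {n k : ℕ} {L : List (Finset ℕ)} :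
    (∃ I J : Composition n, (I.length = k ∧ J.length = k) ∧
      L ∈ blockLists (Icc 1 n) I.blocks J.blocks.partialSums.tail) ↔
    IsMaxOrderedPartition (Icc 1 n) L ∧ L.length = k := by
  constructor
  · rintro ⟨I, J, ⟨hI, -⟩, hL⟩
    exact isMaxOrderedPartition_of_mem_blockLists hI hL
  · rintro ⟨hL, rfl⟩
    exact hL.exists_mem_blockLists

theorem stmt3_general (n k : ℕ) :
    ∑ I ∈ Finset.univ.filter (fun I : Composition n => I.length = k),
      ∑ J ∈ Finset.univ.filter (fun J : Composition n => J.length = k),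
        ∏ s ∈ Finset.range k,
          Nat.choose ((J.blocks.take (s+1)).sum - (I.blocks.take s).sum - 1)
            (I.blocks.getD s 0 - 1)
    = Nat.card {P : Finpartition (Finset.Icc 1 n) // P.parts.card = k} := by
  set compositions := Finset.univ.filter fun I : Composition n => I.length = k
  calc _ = ∑ p ∈ compositions ×ˢ compositions,
        #(blockLists (Icc 1 n) p.1.blocks p.2.blocks.partialSums.tail) := by
        rw [sum_product]
        refine sum_congr rfl fun I hI => sum_congr rfl fun J hJ => ?_
        exact (card_blockLists_Icc (mem_filter.1 hI).2 (mem_filter.1 hJ).2).symm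
    _ = #((compositions ×ˢ compositions).biUnion
          fun p => blockLists (Icc 1 n) p.1.blocks p.2.blocks.partialSums.tail) :=
        (card_biUnion (pairwiseDisjoint_blockLists _ _)).symm
    _ = Nat.card {L // IsMaxOrderedPartition (Icc 1 n) L ∧ L.length = k} := by
        rw [← Nat.card_eq_finsetCard]
        refine Nat.card_congr (Equiv.subtypeEquivRight fun L => ?_)
        simp only [compositions, mem_biUnion, mem_product, mem_filter, mem_univ, true_and,
          Prod.exists, exists_mem_blockLists_iff]
    _ = _ := (Finpartition.card_subtype_card_parts_eq _ _).symm

/-- the total sum of the coefficients `c_{IJ}` over all pairs of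
compositions of `n` of length `k` is the Stirling number of the second kind
`S(n,k)`, the number of set partitions of an `n`-set into `k` blocks. -/
theorem stmt3 (n k : ℕ) (hn : 0 < n) (hk : 0 < k) (hkn : k ≤ n) :
    ∑ I ∈ Finset.univ.filter (fun I : Composition n => I.length = k),
      ∑ J ∈ Finset.univ.filter (fun J : Composition n => J.length = k),
        ∏ s ∈ Finset.range k,
          Nat.choose ((J.blocks.take (s+1)).sum - (I.blocks.take s).sum - 1)
            (I.blocks.getD s 0 - 1)
    = Nat.card {P : Finpartition (Finset.Icc 1 n) // P.parts.card = k} :=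
  stmt3_general n k
end

section
/- The number of set partitions of {1,...,n} into exactly k blocks whose sequence of block sizes, when blocks are ordered by increasing maximal elements, equals a fixed composition I = (i_1,...,i_k) of n, is ∏_{s=2}^{k} binomial(i_1+...+i_s - 1, i_1+...+i_{s-1}). -/
/-!
In a partition of a finite linearly ordered set `A` whose blocks are listed by increasing
maxima, the last block is the one containing `max A`. Removing it leaves such a listing of
the blocks of a partition of the complement `D`, and `D` may be any subset of `A \ {max A}`
of the right size. Hence the number of listings with size sequence `(i_1, …, i_k)` is
`binom(|A| - 1, i_1 + ⋯ + i_{k-1})` times the number with sizes `(i_1, …, i_{k-1})`.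
Since the maxima order the blocks strictly, a partition has at most one such listing.
-/

open Finset Function

variable {α : Type*} [LinearOrder α]

theorem eq_of_strictMono_comp_of_range_eq {ι β γ : Type*} [LinearOrder ι] [WellFoundedLT ι]
    [Preorder γ] {μ : β → γ} {x y : ι → β} (hx : StrictMono (μ ∘ x)) (hy : StrictMono (μ ∘ y))
    (h : Set.range x = Set.range y) : x = y := by
  have hμ : μ ∘ x = μ ∘ y := (hx.range_inj hy).1 (by rw [Set.range_comp, h, ← Set.range_comp])
  funext s
  obtain ⟨t, ht⟩ : x s ∈ Set.range y := h ▸ Set.mem_range_self s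
  have hts : t = s := hy.injective ((congrArg μ ht).trans (congrFun hμ s))
  rw [← ht, hts]

theorem Finset.max_lt_coe {s : Finset α} {a : α} (h : ∀ b ∈ s, b < a) : s.max < a :=
  (Finset.sup_lt_iff (WithBot.bot_lt_coe a)).2 fun b hb => WithBot.coe_lt_coe.2 (h b hb)

theorem Fin.sup_univ_castSucc {β : Type*} [SemilatticeSup β] [OrderBot β] {k : ℕ}
    (f : Fin (k + 1) → β) : univ.sup f = univ.sup (Fin.init f) ⊔ f (Fin.last k) := by
  rw [Fin.univ_castSuccEmb, sup_cons, sup_map, sup_comm]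
  rfl

structure IsOrderedBlocks (A : Finset α) (L : List ℕ) {k : ℕ} (B : Fin k → Finset α) :
    Prop where
  pairwise_disjoint : Pairwise (Disjoint on B)
  sup_eq : univ.sup B = A
  strictMono_max : StrictMono fun s => (B s).max
  card_eq : ∀ s : Fin k, (B s).card = L.getD s 0

variable {A D : Finset α} {L : List ℕ} {k m : ℕ}

namespace IsOrderedBlocks

theorem subset {B : Fin k → Finset α} (h : IsOrderedBlocks A L B) (s : Fin k) : B s ⊆ A :=
  h.sup_eq ▸ le_sup (mem_univ s)

theorem injective {B : Fin k → Finset α} (h : IsOrderedBlocks A L B) : Injective B :=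
  fun _ _ hst => h.strictMono_max.injective (congrArg Finset.max hst)

theorem nonempty {B : Fin k → Finset α} (h : IsOrderedBlocks A L B) (hk : L.length = k)
    (hL : ∀ m ∈ L, 0 < m) (s : Fin k) : (B s).Nonempty := by
  have hs : s.val < L.length := hk ▸ s.isLt
  rw [← card_pos, h.card_eq, List.getD_eq_getElem _ _ hs]
  exact hL _ (List.getElem_mem hs)

instance finite (A : Finset α) (L : List ℕ) (k : ℕ) :
    Finite {B : Fin k → Finset α // IsOrderedBlocks A L B} :=
  Finite.of_injective (fun B s => (⟨B.1 s, mem_powerset.2 (B.2.subset s)⟩ : A.powerset))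
    fun _ _ h => Subtype.ext <| funext fun s => congrArg Subtype.val (congrFun h s)

theorem max'_mem_last {B : Fin (k + 1) → Finset α} (h : IsOrderedBlocks A L B)
    (hA : A.Nonempty) : A.max' hA ∈ B (Fin.last k) := by
  obtain ⟨s, -, hs⟩ := mem_sup.1 (h.sup_eq ▸ A.max'_mem hA : A.max' hA ∈ univ.sup B)
  rcases (Fin.le_last s).lt_or_eq with hlt | rfl
  · have hlast : (B (Fin.last k)).max ≤ (B s).max :=
      calc (B (Fin.last k)).max ≤ A.max := max_mono (h.subset _)
        _ = A.max' hA := (coe_max' hA).symm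
        _ ≤ (B s).max := le_max hs
    exact absurd (h.strictMono_max hlt) hlast.not_gt
  · exact hs

theorem init {B : Fin (k + 1) → Finset α} (h : IsOrderedBlocks A (L ++ [m]) B)
    (hk : L.length = k) : IsOrderedBlocks (A \ B (Fin.last k)) L (Fin.init B) where
  pairwise_disjoint _ _ hst := h.pairwise_disjoint (Fin.castSucc_injective _ |>.ne hst)
  sup_eq := by
    have hdisj : Disjoint (univ.sup (Fin.init B)) (B (Fin.last k)) :=
      Finset.disjoint_sup_left.2 fun s _ => h.pairwise_disjoint (Fin.castSucc_lt_last s).ne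
    rw [← h.sup_eq, Fin.sup_univ_castSucc, sup_eq_union, union_sdiff_cancel_right hdisj]
  strictMono_max := h.strictMono_max.comp Fin.strictMono_castSucc
  card_eq s := by
    rw [Fin.init, h.card_eq, Fin.val_castSucc, List.getD_append _ _ _ _ (hk ▸ s.isLt)]

theorem snoc {C : Fin k → Finset α} (hC : IsOrderedBlocks D L C) (hk : L.length = k)
    (hA : A.Nonempty) (hD : D ⊆ A.erase (A.max' hA)) (hcard : A.card = D.card + m) :
    IsOrderedBlocks A (L ++ [m]) (Fin.snoc C (A \ D)) where
  pairwise_disjoint s t hst := by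
    have hlast : ∀ s, Disjoint (C s) (A \ D) := fun s => disjoint_sdiff.mono_left (hC.subset s)
    induction s using Fin.lastCases <;> induction t using Fin.lastCases <;>
      simp only [Function.onFun, Fin.snoc_castSucc, Fin.snoc_last] at hst ⊢
    · exact absurd rfl hst
    · exact (hlast _).symm
    · exact hlast _
    · exact hC.pairwise_disjoint (fun h => hst (congrArg _ h))
  sup_eq := by
    have hDA : D ⊆ A := hD.trans (erase_subset _ _)
    rw [Fin.sup_univ_castSucc, Fin.init_snoc, Fin.snoc_last, hC.sup_eq, sup_eq_union,
      union_sdiff_of_subset hDA]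
  strictMono_max s t hst := by
    have hmax : ∀ s, (C s).max < (A \ D).max := fun s =>
      calc (C s).max < A.max' hA :=
            max_lt_coe fun b hb => lt_max'_of_mem_erase_max' A hA (hD (hC.subset s hb))
        _ ≤ (A \ D).max :=
            le_max (mem_sdiff.2 ⟨A.max'_mem hA, fun h => (mem_erase.1 (hD h)).1 rfl⟩)
    induction s using Fin.lastCases <;> induction t using Fin.lastCases <;>
      simp only [Fin.snoc_castSucc, Fin.snoc_last] at hst ⊢
    · exact absurd hst (lt_irrefl _)
    · exact absurd hst (Fin.castSucc_lt_last _).not_gt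
    · exact hmax _
    · exact hC.strictMono_max (Fin.castSucc_lt_castSucc_iff.1 hst)
  card_eq s := by
    induction s using Fin.lastCases with
    | last =>
      rw [Fin.snoc_last, Fin.val_last, List.getD_append_right _ _ _ _ hk.le, hk, Nat.sub_self,
        card_sdiff_of_subset (hD.trans (erase_subset _ _)), hcard]
      simp
    | cast s =>
      rw [Fin.snoc_castSucc, hC.card_eq, Fin.val_castSucc,
        List.getD_append _ _ _ _ (hk ▸ s.isLt)]

def appendSingletonEquiv (hk : L.length = k) (hA : A.Nonempty) (hcard : A.card = L.sum + m) :
    {B : Fin (k + 1) → Finset α // IsOrderedBlocks A (L ++ [m]) B} ≃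
      Σ D : (A.erase (A.max' hA)).powersetCard L.sum,
        {C : Fin k → Finset α // IsOrderedBlocks D L C} where
  toFun B := by
    refine ⟨⟨A \ B.1 (Fin.last k), mem_powersetCard.2 ⟨?_, ?_⟩⟩, Fin.init B.1, B.2.init hk⟩
    · exact fun a ha => mem_erase.2
        ⟨fun h => (mem_sdiff.1 ha).2 (h ▸ B.2.max'_mem_last _), (mem_sdiff.1 ha).1⟩
    · rw [card_sdiff_of_subset (B.2.subset _), B.2.card_eq, Fin.val_last,
        List.getD_append_right _ _ _ _ hk.le, hk, Nat.sub_self, hcard]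
      simp
  invFun D := ⟨Fin.snoc D.2.1 (A \ D.1), D.2.2.snoc hk _ (mem_powersetCard.1 D.1.2).1 (by
    rw [(mem_powersetCard.1 D.1.2).2, hcard])⟩
  left_inv B := Subtype.ext <| by
    simp only [Finset.sdiff_sdiff_eq_self (B.2.subset _), Fin.snoc_init_self]
  right_inv D := Sigma.subtype_ext
    (Subtype.ext <| by
      simp only [Fin.snoc_last, Finset.sdiff_sdiff_eq_self
        ((mem_powersetCard.1 D.1.2).1.trans (erase_subset _ _))])
    (Fin.init_snoc (α := fun _ => Finset α) _ _)

end IsOrderedBlocks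

theorem prod_choose_take_sum_append_singleton (L : List ℕ) (m : ℕ) :
    ∏ s ∈ Ico 1 (L.length + 1), (((L ++ [m]).take (s + 1)).sum - 1).choose ((L ++ [m]).take s).sum
      = (L.sum + m - 1).choose L.sum *
          ∏ s ∈ Ico 1 L.length, ((L.take (s + 1)).sum - 1).choose (L.take s).sum := by
  rcases eq_or_ne L [] with rfl | hL
  · simp
  rw [prod_Ico_succ_top (List.length_pos_iff.2 hL), mul_comm, List.take_of_length_le (by simp),
    List.take_left, List.sum_append, List.sum_singleton]
  congr 1
  refine prod_congr rfl fun s hs => ?_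
  have hs : s + 1 ≤ L.length := (mem_Ico.1 hs).2
  rw [List.take_append_of_le_length hs, List.take_append_of_le_length (by omega)]

theorem card_isOrderedBlocks (hL : ∀ m ∈ L, 0 < m) (hk : L.length = k) (hA : A.card = L.sum) :
    Nat.card {B : Fin k → Finset α // IsOrderedBlocks A L B} =
      ∏ s ∈ Ico 1 k, ((L.take (s + 1)).sum - 1).choose (L.take s).sum := by
  induction k generalizing L A with
  | zero =>
    obtain rfl : L = [] := List.length_eq_zero_iff.1 hk
    obtain rfl : A = ∅ := card_eq_zero.1 hA
    have : Unique {B : Fin 0 → Finset α // IsOrderedBlocks ∅ [] B} :=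
      { default := ⟨Fin.elim0, ⟨fun s => s.elim0, by simp, fun s => s.elim0, fun s => s.elim0⟩⟩
        uniq := fun B => Subtype.ext (funext fun s => s.elim0) }
    simp
  | succ k ih =>
    obtain ⟨L, m, rfl⟩ := L.eq_nil_or_concat'.resolve_left (by rintro rfl; simp at hk)
    have hk : L.length = k := by simpa using hk
    have hA : A.card = L.sum + m := by simpa using hA
    subst hk
    have hAne : A.Nonempty := card_pos.1 (hA ▸ Nat.add_pos_right _ (hL m (by simp)))
    rw [Nat.card_congr (IsOrderedBlocks.appendSingletonEquiv rfl hAne hA), Nat.card_sigma,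
      prod_choose_take_sum_append_singleton, ← hA,
      sum_congr rfl fun D _ => ih (fun x hx => hL x (by simp [hx])) rfl
        (mem_powersetCard.1 D.2).2, sum_const, card_univ, Fintype.card_coe, card_powersetCard,
      card_erase_of_mem (max'_mem _ _), smul_eq_mul]

def IsOrderedBlocks.toFinpartition {B : Fin k → Finset α} (h : IsOrderedBlocks A L B)
    (hne : ∀ s, (B s).Nonempty) : Finpartition A where
  parts := univ.image B
  supIndep := supIndep_iff_pairwiseDisjoint.2 <| by
    simp only [coe_image, coe_univ, Set.image_univ]
    rintro _ ⟨s, rfl⟩ _ ⟨t, rfl⟩ hst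
    exact h.pairwise_disjoint fun hst' => hst (congrArg B hst')
  sup_parts := by rw [sup_image]; exact h.sup_eq
  bot_notMem := by
    simp only [mem_image, mem_univ, true_and, not_exists]
    exact fun s => (hne s).ne_empty

theorem card_finpartition_eq_card_isOrderedBlocks (hL : ∀ m ∈ L, 0 < m) (hk : L.length = k) :
    Nat.card {P : Finpartition A //
      P.parts.card = k ∧
      ∃ B : Fin k → Finset α,
        (∀ s, B s ∈ P.parts) ∧
        (∀ p ∈ P.parts, ∃ s, B s = p) ∧
        (∀ s t : Fin k, s < t → (B s).max < (B t).max) ∧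
        (∀ s : Fin k, (B s).card = L.getD s.val 0)} =
      Nat.card {B : Fin k → Finset α // IsOrderedBlocks A L B} := by
  refine (Nat.card_eq_of_bijective (fun B => ⟨B.2.toFinpartition (B.2.nonempty hk hL),
      (card_image_of_injective _ B.2.injective).trans (card_fin k), B.1,
      fun s => mem_image_of_mem _ (mem_univ s),
      fun p hp => (mem_image.1 hp).imp fun _ => And.right, B.2.strictMono_max, B.2.card_eq⟩)
    ⟨fun B C hBC => ?_, ?_⟩).symm
  · have hparts : univ.image B.1 = univ.image C.1 := congrArg (·.1.parts) hBC
    refine Subtype.ext (eq_of_strictMono_comp_of_range_eq B.2.strictMono_max C.2.strictMono_max ?_)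
    ext x
    simpa using congrArg (x ∈ ·) hparts
  · rintro ⟨P, -, B, hmem, hcover, hmono : StrictMono fun s => (B s).max, hsize⟩
    have himage : univ.image B = P.parts := by
      ext p
      simp only [mem_image, mem_univ, true_and]
      exact ⟨fun ⟨s, hs⟩ => hs ▸ hmem s, hcover p⟩
    have hB : IsOrderedBlocks A L B :=
      { pairwise_disjoint := fun s t hst =>
          P.disjoint (hmem s) (hmem t) fun e => hst (hmono.injective (congrArg Finset.max e))
        sup_eq := by rw [← P.sup_parts, ← himage, sup_image]; rfl
        strictMono_max := hmono
        card_eq := hsize }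
    exact ⟨⟨B, hB⟩, Subtype.ext (Finpartition.ext himage)⟩

/-- the number of set partitions of `{1,…,n}` into `k` blocks whose
sequence of block sizes, with blocks ordered by increasing maxima, is the
composition `I`, equals `∏_{s=2}^{k} binom(i_1+⋯+i_s-1, i_1+⋯+i_{s-1})`. -/
theorem stmt4 (n k : ℕ) (I : Composition n) (hI : I.length = k) :
    Nat.card {P : Finpartition (Finset.Icc 1 n) //
      P.parts.card = k ∧
      ∃ B : Fin k → Finset ℕ,
        (∀ s, B s ∈ P.parts) ∧
        (∀ p ∈ P.parts, ∃ s, B s = p) ∧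
        (∀ s t : Fin k, s < t → (B s).max < (B t).max) ∧
        (∀ s : Fin k, (B s).card = I.blocks.getD s.val 0)} =
    ∏ s ∈ Finset.Ico 1 k,
      Nat.choose ((I.blocks.take (s+1)).sum - 1) ((I.blocks.take s).sum) := by
  subst hI
  rw [card_finpartition_eq_card_isOrderedBlocks (fun _ => I.blocks_pos) I.blocks_length,
    card_isOrderedBlocks (fun _ => I.blocks_pos) I.blocks_length (by simp [I.blocks_sum])]
end

section
/- The noncommutative Bell polynomials B_n, defined in noncommuting variables Y_1, Y_2, ... by B_0 = 1 and B_{n+1} = Σ_{k=0}^{n} binomial(n,k) B_{n-k} Y_{k+1}, specialize under the substitution Y_k = ad_a^{k-1}(b) in K⟨a,b⟩ (field of characteristic zero) to B_n = Σ_{k=0}^{n} binomial(n,k) (-1)^k (a+b)^{n-k} a^k. -/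
/-!
Since `ad_a` is a derivation, the Bell recursion with `Y_{k+1} = ad_a^k b` collapses to the
first-order recursion `B_{n+1} = b B_n + ad_a B_n = (a + b) B_n - B_n a`. Hence
`B_n = (L_{a+b} - R_a)^n 1` for the left and right multiplication operators, which commute, and
the binomial theorem for them gives the closed form.
-/

open Finset

theorem LinearMap.mulLeft_sub_mulRight_pow_apply {R A : Type*} [CommRing R] [Ring A] [Algebra R A]
    (x y z : A) (n : ℕ) :
    ((LinearMap.mulLeft R x - LinearMap.mulRight R y) ^ n) z =
      ∑ k ∈ Finset.range (n + 1), ((n.choose k : R) * (-1) ^ k) • (x ^ (n - k) * z * y ^ k) := by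
  have hc : Commute ((-1 : R) • LinearMap.mulRight R y) (LinearMap.mulLeft R x) :=
    (LinearMap.commute_mulLeft_right x y).symm.smul_left _
  rw [sub_eq_neg_add, ← neg_one_smul R (LinearMap.mulRight R y), hc.add_pow, LinearMap.sum_apply]
  refine Finset.sum_congr rfl fun k _ => ?_
  rw [smul_pow, LinearMap.pow_mulLeft, LinearMap.pow_mulRight, mul_comm, mul_smul]
  simp only [smul_apply, Module.End.mul_apply, Module.End.natCast_apply, ← Nat.cast_smul_eq_nsmul R,
    map_smul, mulLeft_apply, mulRight_apply, smul_mul_assoc]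

/-- The Pascal rule on the binomial coefficients matches the Leibniz rule for `δ`. -/
theorem bell_succ_eq_mul_add_derivation {A : Type*} [Ring A] (δ : A →+ A)
    (hδ : ∀ x z, δ (x * z) = δ x * z + x * δ z) (y : A) (B : ℕ → A) (hB0 : B 0 = 1)
    (hBrec : ∀ n, B (n + 1) = ∑ k ∈ range (n + 1), n.choose k • (B (n - k) * δ^[k] y))
    (n : ℕ) : B (n + 1) = y * B n + δ (B n) := by
  induction n using Nat.strong_induction_on with
  | _ n ih =>
    cases n with
    | zero =>
      have hδ1 : δ 1 = 0 := by simpa using hδ 1 1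
      simp [hBrec 0, hB0, hδ1]
    | succ m =>
      have hterm : ∀ i ∈ range (m + 1), m.choose i • (B (m + 1 - i) * δ^[i] y) +
          m.choose i • (B (m - i) * δ^[i + 1] y) =
          y * (m.choose i • (B (m - i) * δ^[i] y)) + δ (m.choose i • (B (m - i) * δ^[i] y)) := by
        intro i hi
        have hi : i ≤ m := Nat.lt_succ_iff.mp (mem_range.mp hi)
        rw [Nat.sub_add_comm hi, ih (m - i) (by omega), Function.iterate_succ_apply', map_nsmul,
          hδ, mul_smul_comm, ← nsmul_add, ← nsmul_add, add_mul, mul_assoc, add_assoc]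
      rw [hBrec (m + 1), sum_choose_succ_nsmul (fun i j => B j * δ^[i] y), ← sum_add_distrib,
        sum_congr rfl hterm, sum_add_distrib, ← mul_sum, ← map_sum, ← hBrec m]

theorem stmt10_general (K : Type*) [Field K]
    (a b : FreeAlgebra K (Fin 2))
    (B : ℕ → FreeAlgebra K (Fin 2))
    (hB0 : B 0 = 1)
    (hBrec : ∀ n : ℕ, B (n + 1) =
      ∑ k ∈ Finset.range (n + 1),
        (n.choose k) • (B (n - k) * (fun x => a * x - x * a)^[k] b)) :
    ∀ n : ℕ, B n =
      ∑ k ∈ Finset.range (n + 1),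
        ((n.choose k : K) * (-1) ^ k) • ((a + b) ^ (n - k) * a ^ k) := by
  set T := LinearMap.mulLeft K (a + b) - LinearMap.mulRight K a
  have hstep : ∀ n, B (n + 1) = T (B n) := fun n => by
    rw [bell_succ_eq_mul_add_derivation (.mulLeft a - .mulRight a)
      (fun x z => by simp only [AddMonoidHom.sub_apply, AddMonoidHom.coe_mulLeft,
        AddMonoidHom.coe_mulRight]; noncomm_ring) b B hB0 hBrec n]
    simp only [T, LinearMap.sub_apply, LinearMap.mulLeft_apply, LinearMap.mulRight_apply,
      AddMonoidHom.sub_apply, AddMonoidHom.coe_mulLeft, AddMonoidHom.coe_mulRight]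
    noncomm_ring
  have hpow : ∀ n, B n = (T ^ n) 1 := fun n => by
    induction n with
    | zero => exact hB0
    | succ n ih => rw [hstep, ih, pow_succ', Module.End.mul_apply]
  intro n
  simp only [hpow, T, LinearMap.mulLeft_sub_mulRight_pow_apply, mul_one]

/-- the noncommutative Bell polynomials `B_n`, specialized at
`Y_k = ad_a^{k-1}(b)`, are `B_n = Σ_{k=0}^n binom(n,k)(-1)^k (a+b)^{n-k}a^k`. -/
theorem stmt10 (K : Type*) [Field K] [CharZero K]
    (a b : FreeAlgebra K (Fin 2))
    (ha : a = FreeAlgebra.ι K (0 : Fin 2))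
    (hb : b = FreeAlgebra.ι K (1 : Fin 2))
    (B : ℕ → FreeAlgebra K (Fin 2))
    (hB0 : B 0 = 1)
    (hBrec : ∀ n : ℕ, B (n + 1) =
      ∑ k ∈ Finset.range (n + 1),
        (n.choose k) • (B (n - k) * (fun x => a * x - x * a)^[k] b)) :
    ∀ n : ℕ, B n =
      ∑ k ∈ Finset.range (n + 1),
        ((n.choose k : K) * (-1) ^ k) • ((a + b) ^ (n - k) * a ^ k) :=
  stmt10_general K a b B hB0 hBrec
end

section
/- The quasi-shuffle product on words over the positive integers is associative: for all words u, v, w, (u ⧢⁺ v) ⧢⁺ w = u ⧢⁺ (v ⧢⁺ w), where the quasi-shuffle is defined recursively by au ⧢⁺ bv = a(u ⧢⁺ bv) + b(au ⧢⁺ v) + (a+b)(u ⧢⁺ v) and ε ⧢⁺ w = w ⧢⁺ ε = w. -/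
/-- The quasi-shuffle (stuffle) product of two words over the positive
integers, with values in the free `ℤ`-module on words. -/
noncomputable def qsh : List ℕ+ → List ℕ+ → (List ℕ+ →₀ ℤ)
  | [], v => Finsupp.single v 1
  | u, [] => Finsupp.single u 1
  | a :: u, b :: v =>
      (qsh u (b :: v)).mapDomain (a :: ·) +
      (qsh (a :: u) v).mapDomain (b :: ·) +
      (qsh u v).mapDomain ((a + b) :: ·)
  termination_by u v => u.length + v.length

/-!
Induction on the total length of `u`, `v`, `w`. When all three words are nonempty,
with first letters `a`, `b`, `c`, unfolding the recursion twice on either side writes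
both triple products as a sum of seven terms: the first letter of the result is the sum
of a nonempty subset of `{a, b, c}`, and what follows is a triple product of strictly
smaller total length, so the two sides agree term by term.
-/

namespace Qsh

lemma qsh_nil_left (v : List ℕ+) : qsh [] v = Finsupp.single v 1 := by
  cases v <;> rw [qsh]

lemma qsh_nil_right (u : List ℕ+) : qsh u [] = Finsupp.single u 1 := by
  cases u <;> rw [qsh]; simp

noncomputable def prepend (d : ℕ+) : (List ℕ+ →₀ ℤ) →ₗ[ℤ] (List ℕ+ →₀ ℤ) :=
  Finsupp.lmapDomain ℤ ℤ (d :: ·)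

lemma qsh_cons_cons (a b : ℕ+) (u v : List ℕ+) :
    qsh (a :: u) (b :: v) =
      prepend a (qsh u (b :: v)) + prepend b (qsh (a :: u) v) + prepend (a + b) (qsh u v) := by
  rw [qsh]; rfl

/-- `qshLeft w f` is `f ⧢⁺ w`. -/
noncomputable def qshLeft (w : List ℕ+) : (List ℕ+ →₀ ℤ) →ₗ[ℤ] (List ℕ+ →₀ ℤ) :=
  Finsupp.linearCombination ℤ (qsh · w)

/-- `qshRight u g` is `u ⧢⁺ g`. -/
noncomputable def qshRight (u : List ℕ+) : (List ℕ+ →₀ ℤ) →ₗ[ℤ] (List ℕ+ →₀ ℤ) :=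
  Finsupp.linearCombination ℤ (qsh u ·)

lemma qshLeft_single (w v : List ℕ+) : qshLeft w (Finsupp.single v 1) = qsh v w := by
  simp [qshLeft]

lemma qshRight_single (u v : List ℕ+) : qshRight u (Finsupp.single v 1) = qsh u v := by
  simp [qshRight]

lemma qshLeft_nil : qshLeft [] = LinearMap.id := by
  ext; simp [qshLeft, qsh_nil_right]

lemma qshRight_nil : qshRight [] = LinearMap.id := by
  ext; simp [qshRight, qsh_nil_left]

lemma qshLeft_cons_prepend (c d : ℕ+) (w : List ℕ+) (f : List ℕ+ →₀ ℤ) :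
    qshLeft (c :: w) (prepend d f) =
      prepend d (qshLeft (c :: w) f) + prepend c (qshLeft w (prepend d f)) +
        prepend (d + c) (qshLeft w f) := by
  suffices h : qshLeft (c :: w) ∘ₗ prepend d =
      prepend d ∘ₗ qshLeft (c :: w) + prepend c ∘ₗ qshLeft w ∘ₗ prepend d +
        prepend (d + c) ∘ₗ qshLeft w from LinearMap.congr_fun h f
  ext x
  simp [qshLeft, prepend, qsh_cons_cons]

lemma qshRight_cons_prepend (a d : ℕ+) (u : List ℕ+) (g : List ℕ+ →₀ ℤ) :
    qshRight (a :: u) (prepend d g) =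
      prepend a (qshRight u (prepend d g)) + prepend d (qshRight (a :: u) g) +
        prepend (a + d) (qshRight u g) := by
  suffices h : qshRight (a :: u) ∘ₗ prepend d =
      prepend a ∘ₗ qshRight u ∘ₗ prepend d + prepend d ∘ₗ qshRight (a :: u) +
        prepend (a + d) ∘ₗ qshRight u from LinearMap.congr_fun h g
  ext x
  simp [qshRight, prepend, qsh_cons_cons]

lemma qshLeft_qsh_cons_cons (a b c : ℕ+) (u v w : List ℕ+) :
    qshLeft (c :: w) (qsh (a :: u) (b :: v)) =
      prepend a (qshLeft (c :: w) (qsh u (b :: v))) +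
      prepend b (qshLeft (c :: w) (qsh (a :: u) v)) +
      prepend c (qshLeft w (qsh (a :: u) (b :: v))) +
      prepend (a + b) (qshLeft (c :: w) (qsh u v)) +
      prepend (a + c) (qshLeft w (qsh u (b :: v))) +
      prepend (b + c) (qshLeft w (qsh (a :: u) v)) +
      prepend (a + b + c) (qshLeft w (qsh u v)) := by
  simp only [qsh_cons_cons a b, map_add, qshLeft_cons_prepend]
  abel

lemma qshRight_qsh_cons_cons (a b c : ℕ+) (u v w : List ℕ+) :
    qshRight (a :: u) (qsh (b :: v) (c :: w)) =
      prepend a (qshRight u (qsh (b :: v) (c :: w))) +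
      prepend b (qshRight (a :: u) (qsh v (c :: w))) +
      prepend c (qshRight (a :: u) (qsh (b :: v) w)) +
      prepend (a + b) (qshRight u (qsh v (c :: w))) +
      prepend (a + c) (qshRight u (qsh (b :: v) w)) +
      prepend (b + c) (qshRight (a :: u) (qsh v w)) +
      prepend (a + b + c) (qshRight u (qsh v w)) := by
  simp only [qsh_cons_cons b c, map_add, qshRight_cons_prepend, add_assoc]
  abel

theorem qsh_assoc (u v w : List ℕ+) :
    qshLeft w (qsh u v) = qshRight u (qsh v w) :=
  match u, v, w with
  | [], v, w => by rw [qsh_nil_left, qshLeft_single, qshRight_nil, LinearMap.id_apply]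
  | u, [], w => by rw [qsh_nil_right, qsh_nil_left, qshLeft_single, qshRight_single]
  | u, v, [] => by rw [qsh_nil_right, qshRight_single, qshLeft_nil, LinearMap.id_apply]
  | a :: u, b :: v, c :: w => by
    rw [qshLeft_qsh_cons_cons, qshRight_qsh_cons_cons,
      qsh_assoc u (b :: v) (c :: w),
      qsh_assoc (a :: u) v (c :: w),
      qsh_assoc (a :: u) (b :: v) w,
      qsh_assoc u v (c :: w),
      qsh_assoc u (b :: v) w,
      qsh_assoc (a :: u) v w,
      qsh_assoc u v w]
termination_by u.length + v.length + w.length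

end Qsh

/-- the quasi-shuffle product, extended bilinearly, is
associative: `(u ⧢⁺ v) ⧢⁺ w = u ⧢⁺ (v ⧢⁺ w)`. -/
theorem stmt13 (u v w : List ℕ+) :
    (qsh u v).sum (fun x c => c • qsh x w) =
      (qsh v w).sum (fun x c => c • qsh u x) := by
  simpa only [Qsh.qshLeft, Qsh.qshRight, Finsupp.linearCombination_apply] using
    Qsh.qsh_assoc u v w
end

section
/- The map I ↦ W_I sending a composition I = (i_1,...,i_r) to the binary word a^{i_1-1} b a^{i_2-1} b ··· a^{i_r-1} b is a bijection between compositions of n and binary words of length n over {a,b} ending in b. Under this bijection, I is anti-Lyndon (i.e., Lyndon for the reversed order on positive integers) if and only if W_I is a Lyndon word for the order a < b. -/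
/-- The binary word `a^{i_1-1} b a^{i_2-1} b ⋯ a^{i_r-1} b` associated with a
composition `I = (i_1, …, i_r)`; `a` is `false`, `b` is `true`. -/
def Wword (I : List ℕ) : List Bool :=
  (I.map fun i => List.replicate (i - 1) false ++ [true]).flatten

/-- A word is Lyndon for the strict order `r`: it is nonempty and strictly
smaller (for the lexicographic extension of `r`) than all of its proper
nonempty suffixes. -/
def IsLyndonRel {α : Type*} (r : α → α → Prop) (w : List α) : Prop :=
  w ≠ [] ∧ ∀ s : List α, s ≠ [] → s ≠ w → s <:+ w → List.Lex r w s

/-!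
Reading `W_I` block by block, a larger part gives a longer run of `a`s before the next `b`, so
`I ↦ W_I` is strictly monotone from the lexicographic order for `>` on compositions to the
lexicographic order on binary words; hence it is injective and reflects the order.
A nonempty suffix of `W_I` is `W_{(m, i_{k+1}, …, i_r)}` with `0 < m ≤ i_k`. For `m = i_k` these
are the images of the suffixes of `I`, and the others (`m < i_k`) are larger, in the reversed
order, than the suffix `(i_k, …, i_r)` itself, so the two Lyndon conditions are equivalent.
-/

lemma List.suffix_replicate_append {α : Type*} {a : α} {s t : List α} {m : ℕ}
    (h : s <:+ List.replicate m a ++ t) :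
    (∃ k ≤ m, s = List.replicate k a ++ t) ∨ s <:+ t := by
  induction m with
  | zero => exact .inr (by simpa using h)
  | succ m ih =>
    rw [List.replicate_succ, List.cons_append] at h
    rcases List.suffix_cons_iff.mp h with rfl | h
    · exact .inl ⟨m + 1, le_rfl, by rw [List.replicate_succ, List.cons_append]⟩
    · exact (ih h).imp_left fun ⟨k, hk, hs⟩ => ⟨k, hk.trans m.le_succ, hs⟩

lemma List.lex_replicate_append {α : Type*} [LT α] {a b : α} (hab : a < b) {k m : ℕ}
    (h : k < m) (u v : List α) :
    List.Lex (· < ·) (List.replicate m a ++ b :: u) (List.replicate k a ++ b :: v) := by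
  obtain ⟨d, rfl⟩ := Nat.exists_eq_add_of_lt h
  rw [Nat.add_assoc, List.replicate_add, List.append_assoc, List.replicate_succ,
    List.cons_append]
  exact List.Lex.append_left _ (List.Lex.rel hab) _

lemma List.Lex.gt_cons_of_le {α : Type*} [LinearOrder α] {l J : List α} {i m : α}
    (h : List.Lex (fun x y => y < x) l (i :: J)) (hmi : m ≤ i) :
    List.Lex (fun x y => y < x) l (m :: J) := by
  rcases hmi.lt_or_eq with hmi | rfl
  · cases h with
    | nil => exact .nil
    | cons => exact .rel hmi
    | rel h => exact .rel (hmi.trans h)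
  · exact h

namespace Wword

@[simp]
lemma nil : Wword [] = [] := rfl

lemma cons (i : ℕ) (I : List ℕ) :
    Wword (i :: I) = List.replicate (i - 1) false ++ true :: Wword I := by
  simp [Wword]

lemma append (I J : List ℕ) : Wword (I ++ J) = Wword I ++ Wword J := by
  simp [Wword]

lemma ne_nil {I : List ℕ} (h : I ≠ []) : Wword I ≠ [] := by
  obtain ⟨i, I, rfl⟩ := List.exists_cons_of_ne_nil h
  simp [cons]

lemma length_eq_sum {I : List ℕ} (hI : ∀ i ∈ I, 0 < i) : (Wword I).length = I.sum := by
  induction I with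
  | nil => rfl
  | cons i I ih =>
    have hi : 0 < i := hI i List.mem_cons_self
    simp only [cons, List.length_append, List.length_replicate, List.length_cons,
      ih fun j hj => hI j (List.mem_cons_of_mem i hj), List.sum_cons]
    omega

lemma getLast?_eq {I : List ℕ} (h : I ≠ []) : (Wword I).getLast? = some true := by
  rw [← List.dropLast_append_getLast h, append]
  simp [cons]

lemma exists_eq_of_getLast?_eq {w : List Bool} (hw : w.getLast? = some true) :
    ∃ I : List ℕ, (∀ i ∈ I, 0 < i) ∧ Wword I = w := by
  induction w with
  | nil => simp at hw
  | cons x w ih =>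
    rcases eq_or_ne w [] with rfl | hw'
    · obtain rfl : x = true := by simpa using hw
      exact ⟨[1], by simp, rfl⟩
    obtain ⟨I, hI, rfl⟩ := ih (by
      obtain ⟨y, w, rfl⟩ := List.exists_cons_of_ne_nil hw'
      rwa [List.getLast?_cons_cons] at hw)
    cases x with
    | true => exact ⟨1 :: I, by simpa using hI, by simp [cons]⟩
    | false =>
      rcases I with _ | ⟨i, I⟩
      · exact absurd nil hw'
      have hi : 0 < i := hI i List.mem_cons_self
      refine ⟨(i + 1) :: I, ?_, ?_⟩
      · simpa using (List.forall_mem_cons.mp hI).2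
      · obtain ⟨k, rfl⟩ := Nat.exists_eq_add_of_lt hi
        simp [cons, List.replicate_succ]

lemma lex_of_lex_gt {I J : List ℕ} (hJ : ∀ j ∈ J, 0 < j)
    (h : List.Lex (fun x y : ℕ => y < x) I J) : List.Lex (· < ·) (Wword I) (Wword J) := by
  induction h with
  | nil =>
    obtain ⟨b, w, hw⟩ := List.exists_cons_of_ne_nil (ne_nil (List.cons_ne_nil _ _))
    rw [nil, hw]
    exact .nil
  | cons _ ih =>
    rw [cons, cons]
    exact List.Lex.append_left _ (.cons (ih fun j hj => hJ j (List.mem_cons_of_mem _ hj))) _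
  | @rel i _ j _ hji =>
    have hj : 0 < j := hJ j List.mem_cons_self
    rw [cons, cons]
    exact List.lex_replicate_append Bool.false_lt_true (by omega) _ _

lemma lex_iff_lex_gt {I J : List ℕ} (hI : ∀ i ∈ I, 0 < i) (hJ : ∀ j ∈ J, 0 < j) :
    List.Lex (· < ·) (Wword I) (Wword J) ↔ List.Lex (fun x y : ℕ => y < x) I J := by
  refine ⟨fun h => ?_, lex_of_lex_gt hJ⟩
  rcases trichotomous_of (List.Lex fun x y : ℕ => y < x) I J with hIJ | rfl | hJI
  · exact hIJ
  · exact absurd h (irrefl _)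
  · exact absurd (lex_of_lex_gt hI hJI) (asymm h)

lemma injOn : Set.InjOn Wword {I | ∀ i ∈ I, 0 < i} := by
  intro I hI J hJ hIJ
  rcases trichotomous_of (List.Lex fun x y : ℕ => y < x) I J with h | h | h
  · exact absurd (hIJ ▸ lex_of_lex_gt hJ h) (irrefl _)
  · exact h
  · exact absurd (hIJ ▸ lex_of_lex_gt hI h) (irrefl _)

lemma exists_of_suffix {I : List ℕ} {s : List Bool} (hI : ∀ i ∈ I, 0 < i) (hs : s ≠ [])
    (h : s <:+ Wword I) :
    ∃ m i J, 0 < m ∧ m ≤ i ∧ i :: J <:+ I ∧ s = Wword (m :: J) := by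
  induction I with
  | nil => exact absurd (List.suffix_nil.mp h) hs
  | cons a I ih =>
    have ha : 0 < a := hI a List.mem_cons_self
    have ih' := ih fun j hj => hI j (List.mem_cons_of_mem a hj)
    rw [cons] at h
    rcases List.suffix_replicate_append h with ⟨k, hk, rfl⟩ | h
    · exact ⟨k + 1, a, I, by omega, by omega, List.suffix_refl _, by simp [cons]⟩
    rcases List.suffix_cons_iff.mp h with rfl | h
    · exact ⟨1, a, I, Nat.one_pos, ha, List.suffix_refl _, by simp [cons]⟩
    obtain ⟨m, i, J, hm, hmi, hJ, rfl⟩ := ih' h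
    exact ⟨m, i, J, hm, hmi, hJ.trans (List.suffix_cons a I), rfl⟩

end Wword

theorem isLyndonRel_wword_iff {I : List ℕ} (hI : ∀ i ∈ I, 0 < i) :
    IsLyndonRel (fun x y : ℕ => y < x) I ↔ IsLyndonRel (· < ·) (Wword I) := by
  constructor
  · rintro ⟨hne, hI_min⟩
    refine ⟨Wword.ne_nil hne, fun s hs hsI hsuf => ?_⟩
    obtain ⟨m, i, J, hm, hmi, hiJ, rfl⟩ := Wword.exists_of_suffix hI hs hsuf
    have hmJ : ∀ j ∈ m :: J, 0 < j :=
      List.forall_mem_cons.mpr ⟨hm, fun j hj => hI j (hiJ.subset (List.mem_cons_of_mem i hj))⟩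
    refine Wword.lex_of_lex_gt hmJ ?_
    by_cases hiJI : i :: J = I
    · subst hiJI
      exact .rel (hmi.lt_of_ne (by rintro rfl; exact hsI rfl))
    · exact (hI_min _ (List.cons_ne_nil _ _) hiJI hiJ).gt_cons_of_le hmi
  · rintro ⟨hne, hW_min⟩
    refine ⟨fun h => hne (h ▸ Wword.nil), fun J hJ hJI hJsuf => ?_⟩
    have hJpos : ∀ j ∈ J, 0 < j := fun j hj => hI j (hJsuf.subset hj)
    obtain ⟨p, rfl⟩ := hJsuf
    rw [← Wword.lex_iff_lex_gt hI hJpos]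
    exact hW_min _ (Wword.ne_nil hJ) (fun h => hJI (Wword.injOn hJpos hI h))
      ⟨Wword p, (Wword.append p J).symm⟩

/-- `I ↦ W_I` is a bijection from compositions of `n` onto
binary words of length `n` ending in `b = true`, and `I` is anti-Lyndon
(Lyndon for the reversed order on the integers) iff `W_I` is Lyndon. -/
theorem stmt14 (n : ℕ) (hn : 0 < n) :
    Set.BijOn Wword {I : List ℕ | (∀ i ∈ I, 0 < i) ∧ I.sum = n}
      {w : List Bool | w.length = n ∧ w.getLast? = some true} ∧
    ∀ I : List ℕ, (∀ i ∈ I, 0 < i) → I.sum = n →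
      (IsLyndonRel (fun x y : ℕ => y < x) I ↔
        IsLyndonRel (· < ·) (Wword I)) := by
  refine ⟨⟨?_, Wword.injOn.mono fun I hI => hI.1, ?_⟩,
    fun I hI _ => isLyndonRel_wword_iff hI⟩
  · rintro I ⟨hI, rfl⟩
    have hne : I ≠ [] := by
      rintro rfl
      exact hn.ne rfl
    exact ⟨Wword.length_eq_sum hI, Wword.getLast?_eq hne⟩
  · rintro w ⟨rfl, hw⟩
    obtain ⟨I, hI, rfl⟩ := Wword.exists_eq_of_getLast?_eq hw
    exact ⟨I, ⟨hI, (Wword.length_eq_sum hI).symm⟩, rfl⟩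
end

section
/- Generating function of Stirling numbers via iterated shuffle exponential: applying the character φ defined by φ(w) = 1/n! for every word w of length n over {a,b} (extended linearly) to the shuffle-exponential exp_⧢(Σ_{m≥1} x^m y W_m), where W_m = a^{m-1}b, yields the exponential generating function of Stirling numbers of the second kind, namely, as formal power series, φ(exp_⧢(Σ_{m≥1} x^m y W_m)) = e^{y(e^x-1)}. -/
/-- The shuffle product of two words, as the multiset of shuffles. -/
def shuf {α : Type*} : List α → List α → Multiset (List α)
  | [], v => {v}
  | u, [] => {u}
  | a :: u, b :: v =>
      ((shuf u (b :: v)).map (a :: ·)) + ((shuf (a :: u) v).map (b :: ·))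
  termination_by u v => u.length + v.length

/-- The shuffle product on the shuffle algebra `K_⧢⟨a,b⟩`, realized as the
free `ℚ`-module on binary words. -/
noncomputable def shufF (f g : List Bool →₀ ℚ) : List Bool →₀ ℚ :=
  f.sum fun u cu => g.sum fun v cv =>
    ((shuf u v).map fun w => Finsupp.single w (cu * cv)).sum

/-- The character `φ` of the shuffle algebra sending each word of length `n`
to `1/n!`. -/
noncomputable def phiChar (f : List Bool →₀ ℚ) : ℚ :=
  f.sum fun w c => c / w.length.factorial

/-- The word `W_m = a^{m-1} b`, with `a = false`, `b = true`. -/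
def Wb (m : ℕ) : List Bool := List.replicate (m - 1) false ++ [true]

/-- The coefficient of `x^n y^k` in `exp_⧢(Σ_{m≥1} x^m y W_m)`, namely
`(1/k!) Σ_{I ⊨ n, ℓ(I)=k} W_{i_1} ⧢ ⋯ ⧢ W_{i_k}`. -/
noncomputable def expShufCoeff (n k : ℕ) : List Bool →₀ ℚ :=
  (k.factorial : ℚ)⁻¹ •
    ∑ I ∈ Finset.univ.filter (fun I : Composition n => I.length = k),
      (I.blocks.map (fun m => Finsupp.single (Wb m) (1 : ℚ))).foldr shufF
        (Finsupp.single [] 1)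

/-- The Stirling number of the second kind `S(n,k)`. -/
noncomputable def stirling2 (n k : ℕ) : ℕ :=
  Nat.card {P : Finpartition (Finset.univ : Finset (Fin n)) // P.parts.card = k}



theorem shuf_nil_left {α : Type*} (v : List α) : shuf [] v = {v} := by
  cases v <;> simp [shuf]

theorem shuf_nil_right {α : Type*} (u : List α) : shuf u [] = {u} := by
  cases u <;> simp [shuf]

theorem shuf_cons_cons {α : Type*} (a b : α) (u v : List α) :
    shuf (a :: u) (b :: v) =
      ((shuf u (b :: v)).map (a :: ·)) + ((shuf (a :: u) v).map (b :: ·)) := by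
  rw [shuf]

theorem shuf_length {α : Type*} : ∀ (u v w : List α), w ∈ shuf u v →
    w.length = u.length + v.length
  | [], v, w, hw => by simp_all [shuf_nil_left]
  | a :: u, [], w, hw => by simp_all [shuf_nil_right]
  | a :: u, b :: v, w, hw => by
      rw [shuf_cons_cons] at hw
      simp only [Multiset.mem_add, Multiset.mem_map] at hw
      rcases hw with ⟨x, hx, rfl⟩ | ⟨x, hx, rfl⟩
      · have := shuf_length u (b :: v) x hx
        simp only [List.length_cons, this]; omega
      · have := shuf_length (a :: u) v x hx
        simp only [List.length_cons, this]; omega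
  termination_by u v => u.length + v.length

theorem shuf_card {α : Type*} : ∀ (u v : List α),
    Multiset.card (shuf u v) = (u.length + v.length).choose u.length
  | [], v => by simp [shuf_nil_left]
  | a :: u, [] => by simp [shuf_nil_right]
  | a :: u, b :: v => by
      rw [shuf_cons_cons]
      simp only [Multiset.card_add, Multiset.card_map,
        shuf_card u (b :: v), shuf_card (a :: u) v]
      simp only [List.length_cons]
      rw [show u.length + (v.length + 1) = (u.length + v.length) + 1 by omega,
        show u.length + 1 + (v.length + 1) = ((u.length + v.length) + 1) + 1 by omega,
        show u.length + 1 + v.length = (u.length + v.length) + 1 by omega,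
        Nat.choose_succ_succ ((u.length + v.length) + 1) u.length]
  termination_by u v => u.length + v.length


noncomputable def phiL : (List Bool →₀ ℚ) →ₗ[ℚ] ℚ :=
  Finsupp.lsum ℚ fun w => LinearMap.toSpanSingleton ℚ ℚ ((w.length.factorial : ℚ)⁻¹)

theorem phiChar_eq (f : List Bool →₀ ℚ) : phiChar f = phiL f := by
  simp only [phiChar, phiL, Finsupp.lsum_apply, Finsupp.sum]
  refine Finset.sum_congr rfl fun w _ => ?_
  simp [LinearMap.toSpanSingleton, div_eq_mul_inv, smul_eq_mul]

theorem phiChar_single (w : List Bool) (c : ℚ) :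
    phiChar (Finsupp.single w c) = c / w.length.factorial := by
  rw [phiChar_eq, phiL]
  simp [LinearMap.toSpanSingleton, div_eq_mul_inv, smul_eq_mul]

theorem choose_factorial_inv (p q : ℕ) :
    ((p + q).choose p : ℚ) * ((p + q).factorial : ℚ)⁻¹ =
      ((p.factorial : ℚ))⁻¹ * ((q.factorial : ℚ))⁻¹ := by
  have h' : ((p + q).choose p : ℚ) * p.factorial * q.factorial = (p + q).factorial := by
    have h := Nat.choose_mul_factorial_mul_factorial (Nat.le_add_right p q)
    rw [Nat.add_sub_cancel_left] at h
    exact_mod_cast congrArg (Nat.cast : ℕ → ℚ) h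
  field_simp
  linarith [h']

theorem phiChar_shufF (f g : List Bool →₀ ℚ) :
    phiChar (shufF f g) = phiChar f * phiChar g := by
  rw [phiChar_eq, shufF, map_finsuppSum]
  have key : ∀ (u : List Bool) (cu : ℚ),
      phiL (g.sum fun v cv => ((shuf u v).map fun w => Finsupp.single w (cu * cv)).sum)
        = (cu / u.length.factorial) * phiChar g := by
    intro u cu
    rw [map_finsuppSum]
    rw [phiChar, Finsupp.sum, Finsupp.sum, Finset.mul_sum]
    refine Finset.sum_congr rfl fun v _ => ?_
    rw [map_multiset_sum, Multiset.map_map]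
    have : ∀ w ∈ shuf u v, (phiL ∘ fun w => Finsupp.single w (cu * g v)) w =
        (cu * g v) * ((u.length + v.length).factorial : ℚ)⁻¹ := by
      intro w hw
      simp only [Function.comp]
      rw [← phiChar_eq, phiChar_single, shuf_length u v w hw, div_eq_mul_inv]
    rw [Multiset.map_congr rfl this, Multiset.map_const', Multiset.sum_replicate,
      shuf_card, nsmul_eq_mul]
    push_cast
    rw [div_eq_mul_inv, div_eq_mul_inv]
    linear_combination (cu * g v) * choose_factorial_inv u.length v.length
  rw [Finsupp.sum, Finset.sum_congr rfl (fun u _ => key u (f u)),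
    show phiChar f = f.sum fun w c => c / w.length.factorial from rfl,
    Finsupp.sum, Finset.sum_mul]


theorem Wb_length {m : ℕ} (hm : 0 < m) : (Wb m).length = m := by
  simp [Wb]; omega

theorem phiChar_fold (L : List ℕ) (hL : ∀ m ∈ L, 0 < m) :
    phiChar ((L.map (fun m => Finsupp.single (Wb m) (1 : ℚ))).foldr shufF
        (Finsupp.single [] 1)) =
      (L.map fun m => ((m.factorial : ℚ))⁻¹).prod := by
  induction L with
  | nil => simp [phiChar_single]
  | cons m L ih =>
      simp only [List.map_cons, List.foldr_cons, List.prod_cons]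
      rw [phiChar_shufF, phiChar_single, Wb_length (hL m (by simp)),
        ih (fun x hx => hL x (List.mem_cons_of_mem _ hx))]
      rw [div_eq_mul_inv, one_mul]


noncomputable def Tq (n k : ℕ) : ℚ :=
  ∑ I ∈ Finset.univ.filter (fun I : Composition n => I.length = k),
    (I.blocks.map fun m => ((m.factorial : ℚ))⁻¹).prod

theorem phiChar_expShufCoeff (n k : ℕ) :
    phiChar (expShufCoeff n k) = (k.factorial : ℚ)⁻¹ * Tq n k := by
  rw [expShufCoeff, phiChar_eq, map_smul, map_sum, Tq, smul_eq_mul]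
  congr 1
  refine Finset.sum_congr rfl fun I _ => ?_
  rw [← phiChar_eq, phiChar_fold _ (fun m hm => I.blocks_pos hm)]

theorem comp_blocks_ne_nil {n : ℕ} (I : Composition (n + 1)) : I.blocks ≠ [] := by
  intro h
  have := I.blocks_sum
  rw [h] at this
  simp at this

theorem comp_cons_decomp {n : ℕ} (I : Composition (n + 1)) :
    I.blocks = I.blocks.headI :: I.blocks.tail := by
  cases h : I.blocks with
  | nil => exact absurd h (comp_blocks_ne_nil I)
  | cons a t => simp

theorem comp_headI_pos {n : ℕ} (I : Composition (n + 1)) : 0 < I.blocks.headI :=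
  I.blocks_pos (by rw [comp_cons_decomp I]; exact List.mem_cons_self)

theorem comp_headI_le {n : ℕ} (I : Composition (n + 1)) : I.blocks.headI ≤ n + 1 := by
  have hs := I.blocks_sum
  conv_lhs at hs => rw [comp_cons_decomp I]
  rw [List.sum_cons] at hs
  omega

theorem comp_tail_sum {n : ℕ} (I : Composition (n + 1)) :
    I.blocks.tail.sum = n + 1 - I.blocks.headI := by
  have hs := I.blocks_sum
  conv_lhs at hs => rw [comp_cons_decomp I]
  rw [List.sum_cons] at hs
  omega

/-- head/tail recurrence for `Tq`. -/
theorem Tq_rec (n k : ℕ) :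
    Tq (n + 1) (k + 1) =
      ∑ m ∈ Finset.Icc 1 (n + 1), ((m.factorial : ℚ))⁻¹ * Tq (n + 1 - m) k := by
  have hrhs : ∀ m ∈ Finset.Icc 1 (n+1), ((m.factorial : ℚ))⁻¹ * Tq (n + 1 - m) k =
      ∑ J ∈ Finset.univ.filter (fun J : Composition (n + 1 - m) => J.length = k),
        ((m.factorial : ℚ))⁻¹ * (J.blocks.map fun i => ((i.factorial : ℚ))⁻¹).prod := by
    intro m _
    rw [Tq, Finset.mul_sum]
  rw [Finset.sum_congr rfl hrhs, Finset.sum_sigma']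
  rw [Tq]
  refine Finset.sum_bij' (i := fun I hI => ⟨I.blocks.headI,
      ⟨I.blocks.tail, fun hi => I.blocks_pos (comp_cons_decomp I ▸ List.mem_cons_of_mem _ hi),
        comp_tail_sum I⟩⟩)
    (j := fun x hx => ⟨x.1 :: x.2.blocks, ?_, ?_⟩) ?_ ?_ ?_ ?_ ?_
  · -- pos
    intro i hi
    rcases List.mem_cons.1 hi with rfl | hi
    · have := Finset.mem_sigma.1 hx
      have := Finset.mem_Icc.1 this.1
      omega
    · exact x.2.blocks_pos hi
  · -- sum
    have hm := Finset.mem_Icc.1 (Finset.mem_sigma.1 hx).1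
    rw [List.sum_cons, x.2.blocks_sum]
    omega
  · -- hi : i maps into sigma set
    intro I hI
    rw [Finset.mem_sigma]
    constructor
    · rw [Finset.mem_Icc]
      exact ⟨comp_headI_pos I, comp_headI_le I⟩
    · rw [Finset.mem_filter]
      refine ⟨Finset.mem_univ _, ?_⟩
      have hlen : I.length = k + 1 := (Finset.mem_filter.1 hI).2
      rw [Composition.length] at hlen ⊢
      conv_lhs at hlen => rw [comp_cons_decomp I]
      simpa using Nat.succ_injective hlen
  · -- hj : j maps into filter set
    intro x hx
    rw [Finset.mem_filter]
    refine ⟨Finset.mem_univ _, ?_⟩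
    have hlen : x.2.length = k := (Finset.mem_filter.1 (Finset.mem_sigma.1 hx).2).2
    rw [Composition.length] at hlen ⊢
    simpa using hlen
  · -- left_inv
    intro I hI
    exact Composition.ext (comp_cons_decomp I).symm
  · -- right_inv
    intro x hx
    rcases x with ⟨m, J⟩
    refine Sigma.ext rfl ?_
    simp only [List.headI_cons, List.tail_cons, heq_eq_eq]
  · -- values
    intro I hI
    conv_lhs => rw [comp_cons_decomp I]
    simp

theorem Tq_zero_zero : Tq 0 0 = 1 := by
  rw [Tq]
  have : Finset.univ.filter (fun I : Composition 0 => I.length = 0) = {⟨[], by simp, by simp⟩} := by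
    apply Finset.eq_singleton_iff_unique_mem.2
    constructor
    · simp [Composition.length]
    · intro I hI
      have : I.blocks = [] := by
        have := (Finset.mem_filter.1 hI).2
        rwa [Composition.length, List.length_eq_zero_iff] at this
      exact Composition.ext this
  rw [this, Finset.sum_singleton]
  simp

theorem Tq_zero_succ (k : ℕ) : Tq 0 (k + 1) = 0 := by
  rw [Tq]
  apply Finset.sum_eq_zero
  intro I hI
  exfalso
  have hlen := (Finset.mem_filter.1 hI).2
  have hb : I.blocks = [] := by
    have hs := I.blocks_sum
    rcases h : I.blocks with _ | ⟨a, t⟩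
    · rfl
    · exfalso
      have ha := I.blocks_pos (h ▸ (List.mem_cons_self : a ∈ a :: t))
      rw [h, List.sum_cons] at hs
      omega
  rw [Composition.length, hb] at hlen
  simp at hlen

theorem Tq_succ_zero (n : ℕ) : Tq (n + 1) 0 = 0 := by
  rw [Tq]
  apply Finset.sum_eq_zero
  intro I hI
  exfalso
  have hlen := (Finset.mem_filter.1 hI).2
  rw [Composition.length, List.length_eq_zero_iff] at hlen
  exact comp_blocks_ne_nil I hlen

theorem sum_Icc_one (N : ℕ) (f : ℕ → ℚ) :
    ∑ m ∈ Finset.Icc 1 N, f m = ∑ j ∈ Finset.range N, f (j + 1) := by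
  refine Finset.sum_nbij' (i := fun m => m - 1) (j := fun j => j + 1) ?_ ?_ ?_ ?_ ?_
  · intro m hm
    rw [Finset.mem_Icc] at hm
    rw [Finset.mem_range]
    omega
  · intro j hj
    rw [Finset.mem_range] at hj
    rw [Finset.mem_Icc]
    omega
  · intro m hm
    rw [Finset.mem_Icc] at hm
    omega
  · intro j _
    omega
  · intro m hm
    rw [Finset.mem_Icc] at hm
    congr 1
    omega

theorem Tq_rec' (n k : ℕ) :
    Tq n (k + 1) = ∑ m ∈ Finset.Icc 1 n, ((m.factorial : ℚ))⁻¹ * Tq (n - m) k := by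
  cases n with
  | zero => simp [Tq_zero_succ]
  | succ n => exact Tq_rec n k

theorem Tq_rec_range (n k : ℕ) :
    Tq n (k + 1) = ∑ j ∈ Finset.range n, (((j + 1).factorial : ℚ))⁻¹ * Tq (n - (j + 1)) k := by
  rw [Tq_rec', sum_Icc_one]

set_option maxHeartbeats 2000000 in
theorem Tq_identity : ∀ n : ℕ, ∀ k : ℕ,
    ((n : ℚ) + 1) * Tq (n + 1) k = k * Tq n (k - 1) + k * Tq n k := by
  intro n
  induction n using Nat.strong_induction_on with
  | _ n IH =>
    intro k
    cases k with
    | zero => simp [Tq_succ_zero]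
    | succ k' =>
      rw [Tq_rec_range (n + 1) k', Finset.mul_sum]
      have step : ∀ j ∈ Finset.range (n + 1),
          ((n : ℚ) + 1) * ((((j + 1).factorial : ℚ))⁻¹ * Tq (n + 1 - (j + 1)) k') =
            ((j.factorial : ℚ))⁻¹ * Tq (n - j) k' +
              (((j + 1).factorial : ℚ))⁻¹ * (((n - j : ℕ) : ℚ) * Tq (n - j) k') := by
        intro j hj
        rw [Finset.mem_range] at hj
        have hle : j ≤ n := by omega
        have h1 : (n + 1 - (j + 1)) = n - j := by omega
        have h3 : ((j.factorial : ℚ)) ≠ 0 := by exact_mod_cast Nat.factorial_ne_zero j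
        have h2 : ((j : ℚ) + 1) ≠ 0 := by positivity
        have key : ((n : ℚ) + 1) * (((j + 1).factorial : ℚ))⁻¹ =
            ((j.factorial : ℚ))⁻¹ + ((n - j : ℕ) : ℚ) * (((j + 1).factorial : ℚ))⁻¹ := by
          rw [Nat.factorial_succ]
          push_cast [Nat.cast_sub hle]
          field_simp
          ring
        rw [h1, ← mul_assoc, key]
        ring
      rw [Finset.sum_congr rfl step, Finset.sum_add_distrib]
      have E : ∑ j ∈ Finset.range n, (((j + 1).factorial : ℚ))⁻¹ * Tq (n - (j + 1)) k' =
          Tq n (k' + 1) := (Tq_rec_range n k').symm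
      have S1 : ∑ j ∈ Finset.range (n + 1), ((j.factorial : ℚ))⁻¹ * Tq (n - j) k' =
          Tq n (k' + 1) + Tq n k' := by
        rw [Finset.sum_range_succ']
        simp only [Nat.sub_zero, Nat.factorial_zero, Nat.cast_one, inv_one, one_mul]
        rw [E]
      have S2 : ∑ j ∈ Finset.range (n + 1),
          (((j + 1).factorial : ℚ))⁻¹ * (((n - j : ℕ) : ℚ) * Tq (n - j) k') =
            (k' : ℚ) * Tq n k' + (k' : ℚ) * Tq n (k' + 1) := by
        rw [Finset.sum_range_succ]
        simp only [Nat.sub_self, Nat.cast_zero, zero_mul, mul_zero, add_zero]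
        have inner : ∀ j ∈ Finset.range n,
            (((j + 1).factorial : ℚ))⁻¹ * (((n - j : ℕ) : ℚ) * Tq (n - j) k') =
              (k' : ℚ) * ((((j + 1).factorial : ℚ))⁻¹ * Tq (n - (j + 1)) (k' - 1)) +
                (k' : ℚ) * ((((j + 1).factorial : ℚ))⁻¹ * Tq (n - (j + 1)) k') := by
          intro j hj
          rw [Finset.mem_range] at hj
          have h4 : (n - j : ℕ) = (n - (j + 1)) + 1 := by omega
          have h5 : n - (j + 1) < n := by omega
          have := IH (n - (j + 1)) h5 k'
          rw [h4]
          push_cast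
          rw [this]
          ring
        rw [Finset.sum_congr rfl inner, Finset.sum_add_distrib, ← Finset.mul_sum,
          ← Finset.mul_sum]
        congr 1
        · rcases Nat.eq_zero_or_pos k' with rfl | hk'
          · simp
          · congr 1
            obtain ⟨k'', rfl⟩ : ∃ k'', k' = k'' + 1 := ⟨k' - 1, by omega⟩
            simp only [Nat.add_sub_cancel]
            exact (Tq_rec_range n k'').symm
        · rw [E]
      rw [S1, S2]
      push_cast
      ring

noncomputable def Aq (n k : ℕ) : ℕ := Nat.card {f : Fin n → Fin k // Function.Surjective f}

theorem Aq_zero_zero : Aq 0 0 = 1 := by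
  rw [Aq, Nat.card_eq_one_iff_unique]
  constructor
  · constructor
    intro f g
    ext x
    exact x.elim0
  · exact ⟨⟨fun x => x.elim0, fun y => y.elim0⟩⟩

theorem Aq_zero_succ (k : ℕ) : Aq 0 (k + 1) = 0 := by
  rw [Aq]
  have : IsEmpty {f : Fin 0 → Fin (k + 1) // Function.Surjective f} := by
    constructor
    rintro ⟨f, hf⟩
    obtain ⟨x, -⟩ := hf 0
    exact x.elim0
  exact Nat.card_of_isEmpty

theorem Aq_succ_zero (n : ℕ) : Aq (n + 1) 0 = 0 := by
  rw [Aq]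
  have : IsEmpty {f : Fin (n + 1) → Fin 0 // Function.Surjective f} := by
    constructor
    rintro ⟨f, -⟩
    exact (f 0).elim0
  exact Nat.card_of_isEmpty

/-- The condition on the "rest" of a surjection after removing position 0 with value `j`. -/
def Cov {n K : ℕ} (j : Fin K) (g : Fin n → Fin K) : Prop :=
  ∀ i, i ≠ j → ∃ x, g x = i

/-- Splitting off the value at `0`. -/
def splitEquiv (n K : ℕ) :
    {f : Fin (n + 1) → Fin K // Function.Surjective f} ≃
      Σ j : Fin K, {g : Fin n → Fin K // Cov j g} where
  toFun f := ⟨f.1 0, fun x => f.1 x.succ, by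
    intro i hi
    obtain ⟨y, hy⟩ := f.2 i
    cases y using Fin.cases with
    | zero => exact absurd hy.symm hi
    | succ x => exact ⟨x, hy⟩⟩
  invFun x := ⟨Fin.cons x.1 x.2.1, by
    intro i
    by_cases hi : i = x.1
    · exact ⟨0, by simp [hi]⟩
    · obtain ⟨y, hy⟩ := x.2.2 i hi
      exact ⟨y.succ, by simp [hy]⟩⟩
  left_inv f := by
    apply Subtype.ext
    exact Fin.cons_self_tail f.1
  right_inv x := by
    rcases x with ⟨j, g, hg⟩
    refine Sigma.subtype_ext ?_ ?_
    · simp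
    · funext y
      simp

theorem cov_card {n K : ℕ} (k : ℕ) (hK : K = k + 1) (j : Fin K) :
    Nat.card {g : Fin n → Fin K // Cov j g} = Aq n K + Aq n k := by
  classical
  have e1 : {g : Fin n → Fin K // Cov j g} ≃
      {x : {g : Fin n → Fin K // Cov j g} // Function.Surjective x.1} ⊕
        {x : {g : Fin n → Fin K // Cov j g} // ¬Function.Surjective x.1} :=
    (Equiv.sumCompl _).symm
  have e2 : {x : {g : Fin n → Fin K // Cov j g} // Function.Surjective x.1} ≃
      {g : Fin n → Fin K // Function.Surjective g} :=
    (Equiv.subtypeSubtypeEquivSubtypeInter _ _).trans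
      (Equiv.subtypeEquivRight fun g => ⟨fun h => h.2, fun h => ⟨fun i _ => h i, h⟩⟩)
  have e3 : {x : {g : Fin n → Fin K // Cov j g} // ¬Function.Surjective x.1} ≃
      {g : Fin n → Fin K // Cov j g ∧ ∀ x, g x ≠ j} := by
    refine (Equiv.subtypeSubtypeEquivSubtypeInter (fun g : Fin n → Fin K => Cov j g)
        (fun g => ¬Function.Surjective g)).trans
      (Equiv.subtypeEquivRight fun g => and_congr_right fun hg => ?_)
    constructor
    · intro h x hx
      refine h fun i => ?_
      by_cases hij : i = j
      · exact ⟨x, hij ▸ hx⟩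
      · exact hg i hij
    · intro h hs
      obtain ⟨x, hx⟩ := hs j
      exact h x hx
  subst hK
  have e4 : {h : Fin n → Fin k // Function.Surjective h} ≃
      {g : Fin n → Fin (k + 1) // Cov j g ∧ ∀ x, g x ≠ j} := by
    refine Equiv.ofBijective
      (fun h => ⟨fun x => j.succAbove (h.1 x), ?_, fun x => Fin.succAbove_ne j (h.1 x)⟩) ⟨?_, ?_⟩
    · intro i hi
      obtain ⟨i', rfl⟩ := Fin.exists_succAbove_eq hi
      obtain ⟨x, hx⟩ := h.2 i'
      exact ⟨x, by dsimp only; rw [hx]⟩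
    · rintro ⟨h₁, hh₁⟩ ⟨h₂, hh₂⟩ heq
      apply Subtype.ext
      funext x
      have := congrFun (congrArg Subtype.val heq) x
      exact Fin.succAbove_right_injective (p := j) this
    · rintro ⟨g, hcov, havoid⟩
      have hne : ∀ x, g x ≠ j := havoid
      choose h hh using fun x => Fin.exists_succAbove_eq (hne x)
      refine ⟨⟨h, ?_⟩, ?_⟩
      · intro i'
        obtain ⟨x, hx⟩ := hcov (j.succAbove i') (Fin.succAbove_ne j i')
        exact ⟨x, Fin.succAbove_right_injective (p := j) (by rw [hh x, hx])⟩
      · apply Subtype.ext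
        funext x
        exact hh x
  calc Nat.card {g : Fin n → Fin (k + 1) // Cov j g}
      = Nat.card ({x : {g : Fin n → Fin (k + 1) // Cov j g} // Function.Surjective x.1} ⊕
        {x : {g : Fin n → Fin (k + 1) // Cov j g} // ¬Function.Surjective x.1}) :=
        Nat.card_congr e1
    _ = Nat.card {x : {g : Fin n → Fin (k + 1) // Cov j g} // Function.Surjective x.1} +
        Nat.card {x : {g : Fin n → Fin (k + 1) // Cov j g} // ¬Function.Surjective x.1} :=
        Nat.card_sum
    _ = Aq n (k + 1) + Aq n k := by
        rw [Nat.card_congr e2, Nat.card_congr (e3.trans e4.symm)]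
        rfl

theorem Aq_rec (n k : ℕ) : Aq (n + 1) (k + 1) = (k + 1) * (Aq n (k + 1) + Aq n k) := by
  classical
  rw [Aq, Nat.card_congr (splitEquiv n (k + 1)), Nat.card_eq_fintype_card, Fintype.card_sigma]
  have : ∀ j : Fin (k + 1), Fintype.card {g : Fin n → Fin (k + 1) // Cov j g} =
      Aq n (k + 1) + Aq n k := by
    intro j
    rw [← Nat.card_eq_fintype_card]
    exact cov_card k rfl j
  rw [Finset.sum_congr rfl (fun j _ => this j)]
  simp [Finset.sum_const, Finset.card_univ]


theorem Aq_eq (n k : ℕ) : Aq n k = k.factorial * stirling2 n k := by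
  classical
  set S := {P : Finpartition (Finset.univ : Finset (Fin n)) // P.parts.card = k} with hS
  have Φdef : ∀ (P : S) (e : ↥P.1.parts ≃ Fin k) (x : Fin n),
      True := fun _ _ _ => trivial
  let Φ : (Σ P : S, (↥P.1.parts ≃ Fin k)) → {f : Fin n → Fin k // Function.Surjective f} :=
    fun A => ⟨fun x => A.2 ⟨A.1.1.part x, A.1.1.part_mem.2 (Finset.mem_univ x)⟩, by
      intro j
      obtain ⟨x, -, hx⟩ := A.1.1.part_surjOn (A.2.symm j).2
      refine ⟨x, ?_⟩
      have h2 : (⟨A.1.1.part x, A.1.1.part_mem.2 (Finset.mem_univ x)⟩ : ↥A.1.1.parts) =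
          A.2.symm j := Subtype.ext hx
      show A.2 ⟨A.1.1.part x, A.1.1.part_mem.2 (Finset.mem_univ x)⟩ = j
      rw [h2, Equiv.apply_symm_apply]⟩
  have hbij : Function.Bijective Φ := by
    constructor
    · rintro ⟨⟨P, hP⟩, e⟩ ⟨⟨Q, hQ⟩, ε⟩ heq
      have hf : ∀ x : Fin n, e ⟨P.part x, P.part_mem.2 (Finset.mem_univ x)⟩ =
          ε ⟨Q.part x, Q.part_mem.2 (Finset.mem_univ x)⟩ :=
        fun x => congrFun (congrArg Subtype.val heq) x
      have hmem : ∀ x y : Fin n, (y ∈ P.part x ↔ y ∈ Q.part x) := by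
        intro x y
        rw [P.mem_part_iff_part_eq_part (Finset.mem_univ y) (Finset.mem_univ x),
          Q.mem_part_iff_part_eq_part (Finset.mem_univ y) (Finset.mem_univ x)]
        constructor
        · intro h
          have h1 : ε ⟨Q.part y, Q.part_mem.2 (Finset.mem_univ y)⟩ =
              ε ⟨Q.part x, Q.part_mem.2 (Finset.mem_univ x)⟩ := by
            rw [← hf y, ← hf x]
            exact congrArg e (Subtype.ext h)
          exact congrArg Subtype.val (ε.injective h1)
        · intro h
          have h1 : e ⟨P.part y, P.part_mem.2 (Finset.mem_univ y)⟩ =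
              e ⟨P.part x, P.part_mem.2 (Finset.mem_univ x)⟩ := by
            rw [hf y, hf x]
            exact congrArg ε (Subtype.ext h)
          exact congrArg Subtype.val (e.injective h1)
      have hpart : ∀ x : Fin n, P.part x = Q.part x := fun x => Finset.ext (hmem x)
      have hPQ : P = Q := by
        ext p
        constructor
        · intro hp
          obtain ⟨x, -, hx⟩ := P.part_surjOn hp
          rw [← hx, hpart]
          exact Q.part_mem.2 (Finset.mem_univ x)
        · intro hp
          obtain ⟨x, -, hx⟩ := Q.part_surjOn hp
          rw [← hx, ← hpart]
          exact P.part_mem.2 (Finset.mem_univ x)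
      subst hPQ
      have he : e = ε := by
        apply Equiv.ext
        rintro ⟨p, hp⟩
        obtain ⟨x, -, hx⟩ := P.part_surjOn hp
        have h1 : (⟨p, hp⟩ : ↥P.parts) = ⟨P.part x, P.part_mem.2 (Finset.mem_univ x)⟩ :=
          Subtype.ext hx.symm
        rw [h1]
        exact hf x
      subst he
      rfl
    · rintro ⟨f, hf⟩
      -- build the partition from fibers
      have hfib : ∀ j : Fin k, (Finset.univ.filter fun x => f x = j).Nonempty := by
        intro j
        obtain ⟨x, hx⟩ := hf j
        exact ⟨x, by simp [hx]⟩
      have hinj : Function.Injective (fun j : Fin k => Finset.univ.filter fun x => f x = j) := by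
        intro j j' h
        dsimp only at h
        obtain ⟨x, hx⟩ := hfib j
        have hx' : x ∈ Finset.univ.filter fun y => f y = j' := by rw [← h]; exact hx
        simp only [Finset.mem_filter] at hx hx'
        rw [← hx.2, hx'.2]
      let P : Finpartition (Finset.univ : Finset (Fin n)) :=
        { parts := Finset.univ.image fun j : Fin k => Finset.univ.filter fun x => f x = j
          supIndep := by
            apply Finset.supIndep_iff_pairwiseDisjoint.2
            intro p hp q hq hpq
            simp only [Finset.coe_image, Set.mem_image] at hp hq
            obtain ⟨j, -, rfl⟩ := hp
            obtain ⟨j', -, rfl⟩ := hq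
            have hjj' : j ≠ j' := fun h => hpq (by rw [h])
            simp only [Function.onFun, id_eq, Finset.disjoint_left, Finset.mem_filter]
            rintro x ⟨-, rfl⟩ ⟨-, h2⟩
            exact hjj' h2
          sup_parts := by
            apply Finset.Subset.antisymm
            · intro x hx
              simp at hx ⊢
            · intro x _hx
              rw [Finset.mem_sup]
              exact ⟨Finset.univ.filter fun y => f y = f x,
                Finset.mem_image_of_mem _ (Finset.mem_univ (f x)), by simp⟩
          bot_notMem := by
            simp only [Finset.bot_eq_empty, Finset.mem_image]
            rintro ⟨j, -, hj⟩
            obtain ⟨x, hx⟩ := hfib j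
            rw [hj] at hx
            exact Finset.notMem_empty x hx }
      have hcard : P.parts.card = k := by
        rw [Finset.card_image_of_injective _ hinj, Finset.card_univ, Fintype.card_fin]
      -- the equiv from parts to Fin k
      let ψ : Fin k → ↥P.parts := fun j =>
        ⟨Finset.univ.filter fun x => f x = j, Finset.mem_image_of_mem _ (Finset.mem_univ j)⟩
      have hψbij : Function.Bijective ψ := by
        constructor
        · intro j j' h
          exact hinj (congrArg Subtype.val h)
        · rintro ⟨p, hp⟩
          replace hp := Finset.mem_image.1 hp
          obtain ⟨j, -, hj⟩ := hp
          exact ⟨j, Subtype.ext hj⟩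
      let e : ↥P.parts ≃ Fin k := (Equiv.ofBijective ψ hψbij).symm
      refine ⟨⟨⟨P, hcard⟩, e⟩, ?_⟩
      apply Subtype.ext
      funext x
      show e ⟨P.part x, _⟩ = f x
      have hpart : P.part x = Finset.univ.filter fun y => f y = f x :=
        P.part_eq_of_mem (Finset.mem_image_of_mem _ (Finset.mem_univ (f x))) (by simp)
      have : (⟨P.part x, P.part_mem.2 (Finset.mem_univ x)⟩ : ↥P.parts) = ψ (f x) :=
        Subtype.ext hpart
      rw [this]
      exact (Equiv.ofBijective ψ hψbij).symm_apply_apply (f x)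
  have hcards : Nat.card {f : Fin n → Fin k // Function.Surjective f} =
      Nat.card (Σ P : S, (↥P.1.parts ≃ Fin k)) :=
    (Nat.card_congr (Equiv.ofBijective Φ hbij)).symm
  rw [Aq, hcards, Nat.card_eq_fintype_card, Fintype.card_sigma]
  have hconst : ∀ P : S, Fintype.card (↥P.1.parts ≃ Fin k) = k.factorial := by
    intro P
    have hc : Fintype.card ↥P.1.parts = Fintype.card (Fin k) := by
      rw [Fintype.card_coe, P.2, Fintype.card_fin]
    rw [Fintype.card_equiv (Fintype.equivFinOfCardEq (by rw [hc, Fintype.card_fin])), hc,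
      Fintype.card_fin]
  rw [Finset.sum_congr rfl (fun P _ => hconst P), Finset.sum_const, Finset.card_univ,
    smul_eq_mul, stirling2, Nat.card_eq_fintype_card, mul_comm]

theorem Tq_eq_Aq : ∀ n k : ℕ, Tq n k = (Aq n k : ℚ) / n.factorial := by
  intro n
  induction n with
  | zero =>
      intro k
      cases k with
      | zero => simp [Tq_zero_zero, Aq_zero_zero]
      | succ k => simp [Tq_zero_succ, Aq_zero_succ]
  | succ n ih =>
      intro k
      cases k with
      | zero => simp [Tq_succ_zero, Aq_succ_zero]
      | succ k' =>
          have hid := Tq_identity n (k' + 1)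
          simp only [Nat.add_sub_cancel] at hid
          rw [ih k', ih (k' + 1)] at hid
          have hnp : ((n : ℚ) + 1) ≠ 0 := by positivity
          have hTq : Tq (n + 1) (k' + 1) =
              ((k' + 1 : ℕ) : ℚ) * ((Aq n k' : ℚ) / n.factorial)
                / ((n : ℚ) + 1) +
              ((k' + 1 : ℕ) : ℚ) * ((Aq n (k' + 1) : ℚ) / n.factorial)
                / ((n : ℚ) + 1) := by
            field_simp at hid ⊢
            push_cast at hid ⊢
            linarith [hid]
          rw [hTq, Aq_rec n k']
          have hfac : ((n + 1).factorial : ℚ) = ((n : ℚ) + 1) * (n.factorial : ℚ) := by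
            rw [Nat.factorial_succ]; push_cast; ring
          have hnf : (n.factorial : ℚ) ≠ 0 := by
            exact_mod_cast Nat.factorial_ne_zero n
          rw [hfac]
          push_cast
          field_simp
          ring

/-- applying the character `φ` to the shuffle exponential
`exp_⧢(Σ_{m≥1} x^m y W_m)` yields `e^{y(e^x-1)}`, i.e., coefficientwise, the
coefficient of `x^n y^k` is `S(n,k)/n!`. -/
theorem stmt18 (n k : ℕ) :
    phiChar (expShufCoeff n k) = (stirling2 n k : ℚ) / n.factorial := by
  rw [phiChar_expShufCoeff, Tq_eq_Aq, Aq_eq]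
  have hkf : (k.factorial : ℚ) ≠ 0 := by exact_mod_cast Nat.factorial_ne_zero k
  push_cast
  field_simp
end
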